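/- arXiv:1401.6755 — 7 statements merged into one kernel-verified Lean document; each statement's English description precedes it below -/
import Mathlib

section
/- Let G be a finite group. Then the power graph P(G) is claw-free if and only if G is a cyclic group whose order is of the form p^m q^n, where p and q are distinct primes, m, n ≥ 0 are integers, and m ≤ 1 or n ≤ 1. -/
/-- Adjacency in the power graph of a group: two distinct elements are adjacent
iff one is a power of the other. -/
def pgAdj {G : Type*} [Group G] (x y : G) : Prop :=
  x ≠ y ∧ (x ∈ Subgroup.zpowers y ∨ y ∈ Subgroup.zpowers x)

/-- The power graph is claw-free (`K_{1,3}`-free). -/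
def pgClawFree (G : Type*) [Group G] : Prop :=
  ¬ ∃ a b c d : G, b ≠ c ∧ b ≠ d ∧ c ≠ d ∧
      pgAdj a b ∧ pgAdj a c ∧ pgAdj a d ∧
      ¬ pgAdj b c ∧ ¬ pgAdj b d ∧ ¬ pgAdj c d

/-!
Three elements generating pairwise incomparable cyclic subgroups are the leaves of a claw
centred at `1`. A non-cyclic group contains three such elements: choose maximal cyclic subgroups
one after another, each time above an element outside those already chosen, which is possible
because no group is the union of two proper subgroups. In a cyclic group `x` is a power of `y`
exactly when `orderOf x ∣ orderOf y`, so its claws correspond to three pairwise non-dividing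
divisors of its order `N`. Such divisors exist iff `N` has three prime factors `p, q, r`, or
`p², q² ∣ N` (take `p², q², pq`); otherwise `N = p^m q^n` with `m ≤ 1`, and two of any three
divisors share their `p`-adic valuation and are therefore comparable.
-/

open Subgroup

section PowerGraph

variable {G : Type*} [Group G]

lemma pgAdj_one_of_ne_one {x : G} (hx : x ≠ 1) : pgAdj 1 x :=
  ⟨hx.symm, .inl (one_mem _)⟩

lemma ne_one_of_incompRel_zpowers {x y : G}
    (h : IncompRel (· ≤ ·) (zpowers x) (zpowers y)) : x ≠ 1 := by
  rintro rfl
  exact h.1 (by simp)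

lemma not_pgAdj_of_incompRel_zpowers {x y : G}
    (h : IncompRel (· ≤ ·) (zpowers x) (zpowers y)) : ¬ pgAdj x y := by
  rintro ⟨-, hxy | hyx⟩
  exacts [h.1 (zpowers_le.2 hxy), h.2 (zpowers_le.2 hyx)]

lemma incompRel_zpowers_of_not_pgAdj {x y : G} (hne : x ≠ y) (h : ¬ pgAdj x y) :
    IncompRel (· ≤ ·) (zpowers x) (zpowers y) :=
  ⟨fun hxy => h ⟨hne, .inl (zpowers_le.1 hxy)⟩, fun hyx => h ⟨hne, .inr (zpowers_le.1 hyx)⟩⟩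

lemma incompRel_zpowers_of_maximal {m y : G} (hm : ∀ g, m ∈ zpowers g → g ∈ zpowers m)
    (hy : y ∉ zpowers m) : IncompRel (· ≤ ·) (zpowers m) (zpowers y) :=
  ⟨fun h => hy (hm y (zpowers_le.1 h)), fun h => hy (zpowers_le.1 h)⟩

lemma not_pgClawFree_of_incompRel_zpowers {x y z : G}
    (hxy : IncompRel (· ≤ ·) (zpowers x) (zpowers y))
    (hxz : IncompRel (· ≤ ·) (zpowers x) (zpowers z))
    (hyz : IncompRel (· ≤ ·) (zpowers y) (zpowers z)) : ¬ pgClawFree G := by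
  have hne {a b : G} (h : IncompRel (· ≤ ·) (zpowers a) (zpowers b)) : a ≠ b := by
    rintro rfl
    exact h.1 le_rfl
  exact fun h => h ⟨1, x, y, z, hne hxy, hne hxz, hne hyz,
    pgAdj_one_of_ne_one (ne_one_of_incompRel_zpowers hxy),
    pgAdj_one_of_ne_one (ne_one_of_incompRel_zpowers hxy.symm),
    pgAdj_one_of_ne_one (ne_one_of_incompRel_zpowers hxz.symm),
    not_pgAdj_of_incompRel_zpowers hxy, not_pgAdj_of_incompRel_zpowers hxz,
    not_pgAdj_of_incompRel_zpowers hyz⟩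

end PowerGraph

section Cyclicity

variable {G : Type*} [Group G] [Finite G]

lemma exists_maximal_zpowers_mem (x : G) :
    ∃ m : G, x ∈ zpowers m ∧ ∀ y, m ∈ zpowers y → y ∈ zpowers m := by
  obtain ⟨m, hxm, hmax⟩ :=
    Set.Finite.exists_maximalFor zpowers {y | x ∈ zpowers y} (Set.toFinite _) ⟨x, mem_zpowers x⟩
  refine ⟨m, hxm, fun y hmy => ?_⟩
  have hle : zpowers m ≤ zpowers y := zpowers_le.2 hmy
  exact zpowers_le.1 (hmax (hle hxm) hle)

lemma isCyclic_of_pgClawFree (h : pgClawFree G) : IsCyclic G := by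
  by_contra hG
  have hproper (g : G) : ∃ z, z ∉ zpowers g := by
    by_contra! hg
    exact hG ⟨g, hg⟩
  have not_mem_of_mem {g m z : G} (hz : z ∈ zpowers m) (hzg : z ∉ zpowers g) :
      m ∉ zpowers g := fun hm => hzg (zpowers_le.2 hm hz)
  obtain ⟨m₁, -, hm₁⟩ := exists_maximal_zpowers_mem (1 : G)
  obtain ⟨a, ha⟩ := hproper m₁
  obtain ⟨m₂, ham₂, hm₂⟩ := exists_maximal_zpowers_mem a
  obtain ⟨z, hz⟩ : ∃ z, z ∉ (zpowers m₁ : Set G) ∪ zpowers m₂ := by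
    by_contra! hcover
    obtain h₁ | h₂ := SubgroupClass.subset_union.1
      (fun g _ => hcover g : ((⊤ : Subgroup G) : Set G) ⊆ zpowers m₁ ∪ zpowers m₂)
    exacts [ha (h₁ trivial), (hproper m₂).elim fun v hv => hv (h₂ trivial)]
  obtain ⟨hz₁, hz₂⟩ := not_or.1 hz
  obtain ⟨m₃, hzm₃, -⟩ := exists_maximal_zpowers_mem z
  exact not_pgClawFree_of_incompRel_zpowers
    (incompRel_zpowers_of_maximal hm₁ (not_mem_of_mem ham₂ ha))
    (incompRel_zpowers_of_maximal hm₁ (not_mem_of_mem hzm₃ hz₁))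
    (incompRel_zpowers_of_maximal hm₂ (not_mem_of_mem hzm₃ hz₂)) h

end Cyclicity

namespace Nat

def HasThreeIncomparableDivisors (N : ℕ) : Prop :=
  ∃ a b c : ℕ, a ∣ N ∧ b ∣ N ∧ c ∣ N ∧
    IncompRel (· ∣ ·) a b ∧ IncompRel (· ∣ ·) a c ∧ IncompRel (· ∣ ·) b c

lemma incompRel_dvd_of_prime {p q : ℕ} (hp : p.Prime) (hq : q.Prime) (hpq : p ≠ q) :
    IncompRel (· ∣ ·) p q :=
  ⟨fun h => hpq ((prime_dvd_prime_iff_eq hp hq).1 h),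
    fun h => hpq ((prime_dvd_prime_iff_eq hq hp).1 h).symm⟩

lemma eq_pow_mul_pow_of_primeFactors_subset {N p q : ℕ} (hN : N ≠ 0) (hpq : p ≠ q)
    (h : N.primeFactors ⊆ {p, q}) : N = p ^ N.factorization p * q ^ N.factorization q :=
  calc N = N.factorization.prod (· ^ ·) := (prod_factorization_pow_eq_self hN).symm
    _ = ∏ r ∈ {p, q}, r ^ N.factorization r :=
      Finsupp.prod_of_support_subset _ h _ fun _ _ => pow_zero _
    _ = _ := Finset.prod_pair hpq

lemma dvd_or_dvd_of_factorization_eq {a b p q : ℕ} (ha : a ≠ 0) (hb : b ≠ 0)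
    (hap : a.primeFactors ⊆ {p, q}) (hbp : b.primeFactors ⊆ {p, q})
    (h : a.factorization p = b.factorization p) : a ∣ b ∨ b ∣ a := by
  wlog hq : a.factorization q ≤ b.factorization q generalizing a b
  · exact (this hb ha hbp hap h.symm (by omega)).symm
  left
  rw [← factorization_le_iff_dvd ha hb, Finsupp.le_iff]
  intro r hr
  rcases Finset.mem_insert.1 (hap hr) with rfl | hr
  · exact h.le
  · rw [Finset.mem_singleton.1 hr]
    exact hq

lemma HasThreeIncomparableDivisors.of_primes {N p q r : ℕ} (hp : p.Prime) (hq : q.Prime)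
    (hr : r.Prime) (hpq : p ≠ q) (hpr : p ≠ r) (hqr : q ≠ r) (hpN : p ∣ N) (hqN : q ∣ N)
    (hrN : r ∣ N) : N.HasThreeIncomparableDivisors :=
  ⟨p, q, r, hpN, hqN, hrN, incompRel_dvd_of_prime hp hq hpq, incompRel_dvd_of_prime hp hr hpr,
    incompRel_dvd_of_prime hq hr hqr⟩

lemma HasThreeIncomparableDivisors.of_sq {N p q : ℕ} (hp : p.Prime) (hq : q.Prime)
    (hpq : p ≠ q) (hpN : p ^ 2 ∣ N) (hqN : q ^ 2 ∣ N) : N.HasThreeIncomparableDivisors := by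
  have hpq' := incompRel_dvd_of_prime hp hq hpq
  have hmul {a b c : ℕ} (hc : c ≠ 0) (h : IncompRel (· ∣ ·) a b) :
      IncompRel (· ∣ ·) (c * a) (c * b) := by
    simpa only [IncompRel, Nat.mul_dvd_mul_iff_left (pos_of_ne_zero hc)] using h
  refine ⟨p ^ 2, q ^ 2, p * q, hpN, hqN, ?_, ?_, ?_, ?_⟩
  · exact Coprime.mul_dvd_of_dvd_of_dvd ((coprime_primes hp hq).2 hpq)
      ((dvd_pow_self p two_ne_zero).trans hpN) ((dvd_pow_self q two_ne_zero).trans hqN)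
  · simpa only [IncompRel, Nat.pow_dvd_pow_iff two_ne_zero] using hpq'
  · simpa only [sq] using hmul hp.ne_zero hpq'
  · simpa only [sq, mul_comm p q] using hmul hq.ne_zero hpq'.symm

lemma exists_primes_subset_pair {s : Finset ℕ} (hs : ∀ p ∈ s, p.Prime) (hcard : s.card ≤ 2) :
    ∃ p q, p.Prime ∧ q.Prime ∧ p ≠ q ∧ s ⊆ {p, q} := by
  have h23 : 2 ≤ (s ∪ {2, 3}).card :=
    (Finset.card_le_card Finset.subset_union_right).trans' (by simp)
  obtain ⟨u, hsu, hut, hu⟩ := Finset.exists_subsuperset_card_eq Finset.subset_union_left hcard h23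
  obtain ⟨p, q, hpq, rfl⟩ := Finset.card_eq_two.1 hu
  have hprime {r : ℕ} (hr : r ∈ s ∪ {2, 3}) : r.Prime := by
    simp only [Finset.mem_union, Finset.mem_insert, Finset.mem_singleton] at hr
    rcases hr with hr | rfl | rfl
    exacts [hs r hr, prime_two, prime_three]
  exact ⟨p, q, hprime (hut (by simp)), hprime (hut (by simp)), hpq, hsu⟩

lemma exists_eq_pow_mul_pow_of_not_hasThreeIncomparableDivisors {N : ℕ} (hN : N ≠ 0)
    (h : ¬ N.HasThreeIncomparableDivisors) :
    ∃ p q m n : ℕ, p.Prime ∧ q.Prime ∧ p ≠ q ∧ (m ≤ 1 ∨ n ≤ 1) ∧ N = p ^ m * q ^ n := by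
  have hcard : N.primeFactors.card ≤ 2 := by
    by_contra! h3
    obtain ⟨p, hp, q, hq, r, hr, hpq, hpr, hqr⟩ := Finset.two_lt_card.1 h3
    exact h (.of_primes (prime_of_mem_primeFactors hp) (prime_of_mem_primeFactors hq)
      (prime_of_mem_primeFactors hr) hpq hpr hqr (dvd_of_mem_primeFactors hp)
      (dvd_of_mem_primeFactors hq) (dvd_of_mem_primeFactors hr))
  obtain ⟨p, q, hp, hq, hpq, hsub⟩ :=
    exists_primes_subset_pair (fun _ => prime_of_mem_primeFactors) hcard
  refine ⟨p, q, _, _, hp, hq, hpq, ?_, eq_pow_mul_pow_of_primeFactors_subset hN hpq hsub⟩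
  by_contra! hsq
  exact h (.of_sq hp hq hpq ((hp.pow_dvd_iff_le_factorization hN).2 hsq.1)
    ((hq.pow_dvd_iff_le_factorization hN).2 hsq.2))

lemma not_hasThreeIncomparableDivisors_of_factorization_le_one {N p q : ℕ} (hN : N ≠ 0)
    (hsub : N.primeFactors ⊆ {p, q}) (hp : N.factorization p ≤ 1) :
    ¬ N.HasThreeIncomparableDivisors := by
  rintro ⟨a, b, c, ha, hb, hc, hab, hac, hbc⟩
  have hdiv {d : ℕ} (hd : d ∣ N) :
      d ≠ 0 ∧ d.primeFactors ⊆ {p, q} ∧ d.factorization p ≤ 1 :=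
    ⟨ne_zero_of_dvd_ne_zero hN hd, (primeFactors_mono hd hN).trans hsub,
      ((factorization_le_iff_dvd (ne_zero_of_dvd_ne_zero hN hd) hN).2 hd p).trans hp⟩
  obtain ⟨ha0, haf, hap⟩ := hdiv ha
  obtain ⟨hb0, hbf, hbp⟩ := hdiv hb
  obtain ⟨hc0, hcf, hcp⟩ := hdiv hc
  rcases (by omega : a.factorization p = b.factorization p ∨ a.factorization p =
      c.factorization p ∨ b.factorization p = c.factorization p) with h | h | h
  · exact (dvd_or_dvd_of_factorization_eq ha0 hb0 haf hbf h).elim hab.1 hab.2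
  · exact (dvd_or_dvd_of_factorization_eq ha0 hc0 haf hcf h).elim hac.1 hac.2
  · exact (dvd_or_dvd_of_factorization_eq hb0 hc0 hbf hcf h).elim hbc.1 hbc.2

lemma not_hasThreeIncomparableDivisors_pow_mul_pow {p q m n : ℕ} (hp : p.Prime) (hq : q.Prime)
    (hpq : p ≠ q) (hm : m ≤ 1) : ¬ (p ^ m * q ^ n).HasThreeIncomparableDivisors := by
  have hpm : p ^ m ≠ 0 := pow_ne_zero _ hp.ne_zero
  have hqn : q ^ n ≠ 0 := pow_ne_zero _ hq.ne_zero
  refine not_hasThreeIncomparableDivisors_of_factorization_le_one (p := p) (q := q)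
    (mul_ne_zero hpm hqn) ?_ ?_
  · intro r hr
    have hr' := prime_of_mem_primeFactors hr
    rcases hr'.dvd_mul.1 (dvd_of_mem_primeFactors hr) with h | h
    · simp [(prime_dvd_prime_iff_eq hr' hp).1 (hr'.dvd_of_dvd_pow h)]
    · simp [(prime_dvd_prime_iff_eq hr' hq).1 (hr'.dvd_of_dvd_pow h)]
  · simp [factorization_mul hpm hqn, hp.factorization_pow, hq.factorization_pow, hpq.symm, hm]

end Nat

section CyclicGroup

variable {G : Type*} [Group G] [Finite G] [IsCyclic G]

lemma IsCyclic.mem_zpowers_iff_orderOf_dvd {x y : G} :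
    x ∈ zpowers y ↔ orderOf x ∣ orderOf y := by
  classical
  cases nonempty_fintype G
  refine ⟨orderOf_dvd_of_mem_zpowers, fun h => ?_⟩
  set S := Finset.univ.filter fun g : G => g ^ orderOf y = 1
  have hsub : (zpowers y : Set G).toFinset ⊆ S := fun g hg => by
    simpa [S, ← orderOf_dvd_iff_pow_eq_one] using orderOf_dvd_of_mem_zpowers (by simpa using hg)
  -- the `orderOf y`-torsion has at most `orderOf y` elements, as many as `zpowers y`
  have hS : S = (zpowers y : Set G).toFinset := (Finset.eq_of_subset_of_card_le hsub <|
    (IsCyclic.card_pow_eq_one_le (orderOf_pos y)).trans_eq <| by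
      rw [Set.toFinset_card, ← Nat.card_eq_fintype_card]
      exact (Nat.card_zpowers y).symm).symm
  simpa [hS] using (show x ∈ S by simpa [S, ← orderOf_dvd_iff_pow_eq_one])

lemma IsCyclic.exists_orderOf_eq {d : ℕ} (hd : d ∣ Nat.card G) : ∃ x : G, orderOf x = d := by
  obtain ⟨g, hg⟩ := IsCyclic.exists_ofOrder_eq_natCard (α := G)
  refine ⟨g ^ (Nat.card G / d), ?_⟩
  rw [orderOf_pow, hg, Nat.gcd_eq_right (Nat.div_dvd_of_dvd hd),
    Nat.div_div_self hd Nat.card_pos.ne']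

lemma IsCyclic.pgClawFree_iff : pgClawFree G ↔ ¬ (Nat.card G).HasThreeIncomparableDivisors := by
  have hincomp {x y : G} : IncompRel (· ≤ ·) (zpowers x) (zpowers y) ↔
      IncompRel (· ∣ ·) (orderOf x) (orderOf y) := by
    simp only [IncompRel, zpowers_le, IsCyclic.mem_zpowers_iff_orderOf_dvd]
  constructor
  · rintro h ⟨a, b, c, ha, hb, hc, hab, hac, hbc⟩
    obtain ⟨x, rfl⟩ := IsCyclic.exists_orderOf_eq ha
    obtain ⟨y, rfl⟩ := IsCyclic.exists_orderOf_eq hb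
    obtain ⟨z, rfl⟩ := IsCyclic.exists_orderOf_eq hc
    exact not_pgClawFree_of_incompRel_zpowers (hincomp.2 hab) (hincomp.2 hac) (hincomp.2 hbc) h
  · rintro h ⟨-, x, y, z, hxy, hxz, hyz, -, -, -, nxy, nxz, nyz⟩
    exact h ⟨_, _, _, orderOf_dvd_natCard x, orderOf_dvd_natCard y, orderOf_dvd_natCard z,
      hincomp.1 (incompRel_zpowers_of_not_pgAdj hxy nxy),
      hincomp.1 (incompRel_zpowers_of_not_pgAdj hxz nxz),
      hincomp.1 (incompRel_zpowers_of_not_pgAdj hyz nyz)⟩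

end CyclicGroup

theorem clawfree_iff_cyclic_pm_qn {G : Type*} [Group G] [Finite G] :
    pgClawFree G ↔
      ∃ p q m n : ℕ, p.Prime ∧ q.Prime ∧ p ≠ q ∧ (m ≤ 1 ∨ n ≤ 1) ∧
        IsCyclic G ∧ Nat.card G = p ^ m * q ^ n := by
  constructor
  · intro h
    have := isCyclic_of_pgClawFree h
    obtain ⟨p, q, m, n, hp, hq, hpq, hmn, hN⟩ :=
      Nat.exists_eq_pow_mul_pow_of_not_hasThreeIncomparableDivisors Nat.card_pos.ne'
        (IsCyclic.pgClawFree_iff.1 h)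
    exact ⟨p, q, m, n, hp, hq, hpq, hmn, this, hN⟩
  · rintro ⟨p, q, m, n, hp, hq, hpq, hmn, hcyc, hN⟩
    refine IsCyclic.pgClawFree_iff.2 ?_
    rcases hmn with hm | hn
    · rw [hN]
      exact Nat.not_hasThreeIncomparableDivisors_pow_mul_pow hp hq hpq hm
    · rw [hN, mul_comm]
      exact Nat.not_hasThreeIncomparableDivisors_pow_mul_pow hq hp hpq.symm hn
end

section
/- If G is a non-cyclic finite group whose power graph P(G) is K_{1,4}-free, then G has exactly three maximal cyclic subgroups (cyclic subgroups that are maximal, under inclusion, among all cyclic subgroups of G). -/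
/-- The power graph is `K_{1,4}`-free. -/
def pgK14Free (G : Type*) [Group G] : Prop :=
  ¬ ∃ a b₁ b₂ b₃ b₄ : G,
      b₁ ≠ b₂ ∧ b₁ ≠ b₃ ∧ b₁ ≠ b₄ ∧ b₂ ≠ b₃ ∧ b₂ ≠ b₄ ∧ b₃ ≠ b₄ ∧
      pgAdj a b₁ ∧ pgAdj a b₂ ∧ pgAdj a b₃ ∧ pgAdj a b₄ ∧
      ¬ pgAdj b₁ b₂ ∧ ¬ pgAdj b₁ b₃ ∧ ¬ pgAdj b₁ b₄ ∧
      ¬ pgAdj b₂ b₃ ∧ ¬ pgAdj b₂ b₄ ∧ ¬ pgAdj b₃ b₄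

/-!
Generators of distinct maximal cyclic subgroups are pairwise non-adjacent in the power graph,
while all of them are adjacent to `1`; so `K_{1,4}`-freeness allows at most three maximal cyclic
subgroups. Conversely every element lies in a maximal cyclic subgroup, none of which is the whole
group when `G` is not cyclic, and a group is never the union of two proper subgroups; hence there
are at least three.
-/

open Subgroup

section

variable {G : Type*} [Group G]

namespace Subgroup

theorem maximal_isCyclic_iff {H : Subgroup G} :
    Maximal (fun K : Subgroup G ↦ IsCyclic K) H ↔
      IsCyclic H ∧ ∀ K : Subgroup G, IsCyclic K → H ≤ K → H = K :=
  ⟨fun h ↦ ⟨h.prop, fun _ hK hle ↦ (h.eq_of_ge hK hle).symm⟩,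
    fun h ↦ ⟨h.1, fun K hK hle ↦ (h.2 K hK hle).ge⟩⟩

theorem exists_maximal_isCyclic_mem [Finite G] (x : G) :
    ∃ M : Subgroup G, Maximal (fun K : Subgroup G ↦ IsCyclic K) M ∧ x ∈ M := by
  obtain ⟨M, hxM, hM⟩ :=
    Finite.exists_le_maximal (p := fun K : Subgroup G ↦ IsCyclic K) (isCyclic_zpowers x)
  exact ⟨M, hM, zpowers_le.mp hxM⟩

theorem ne_bot_of_maximal_isCyclic [Nontrivial G] {M : Subgroup G}
    (hM : Maximal (fun K : Subgroup G ↦ IsCyclic K) M) : M ≠ ⊥ := by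
  rintro rfl
  obtain ⟨x, hx⟩ := exists_ne (1 : G)
  exact hx (zpowers_eq_bot.mp (hM.eq_of_ge (isCyclic_zpowers x) bot_le))

theorem ne_top_of_maximal_isCyclic (hG : ¬ IsCyclic G) {M : Subgroup G}
    (hM : Maximal (fun K : Subgroup G ↦ IsCyclic K) M) : M ≠ ⊤ := by
  rintro rfl
  exact hG (topEquiv.isCyclic.mp hM.prop)

theorem exists_notMem_and_notMem {H K : Subgroup G} (hH : H ≠ ⊤) (hK : K ≠ ⊤) :
    ∃ z, z ∉ H ∧ z ∉ K := by
  obtain ⟨x, -, hxH⟩ := SetLike.exists_of_lt hH.lt_top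
  obtain ⟨y, -, hyK⟩ := SetLike.exists_of_lt hK.lt_top
  by_cases hxK : x ∈ K
  · by_cases hyH : y ∈ H
    · refine ⟨x * y, fun hxy ↦ hxH ?_, fun hxy ↦ hyK ?_⟩
      · simpa using H.mul_mem hxy (H.inv_mem hyH)
      · simpa using K.mul_mem (K.inv_mem hxK) hxy
    · exact ⟨y, hyH, hyK⟩
  · exact ⟨x, hxH, hxK⟩

theorem two_lt_ncard_maximal_isCyclic [Finite G] (hG : ¬ IsCyclic G) :
    2 < {M : Subgroup G | Maximal (fun K : Subgroup G ↦ IsCyclic K) M}.ncard := by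
  rw [Set.two_lt_ncard_iff]
  obtain ⟨M₁, hM₁, -⟩ := exists_maximal_isCyclic_mem (1 : G)
  obtain ⟨x, -, hx⟩ := SetLike.exists_of_lt (ne_top_of_maximal_isCyclic hG hM₁).lt_top
  obtain ⟨M₂, hM₂, hxM₂⟩ := exists_maximal_isCyclic_mem x
  obtain ⟨z, hz₁, hz₂⟩ := exists_notMem_and_notMem (ne_top_of_maximal_isCyclic hG hM₁)
    (ne_top_of_maximal_isCyclic hG hM₂)
  obtain ⟨M₃, hM₃, hzM₃⟩ := exists_maximal_isCyclic_mem z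
  exact ⟨M₁, M₂, M₃, hM₁, hM₂, hM₃, fun h ↦ hx (h ▸ hxM₂), fun h ↦ hz₁ (h ▸ hzM₃),
    fun h ↦ hz₂ (h ▸ hzM₃)⟩

end Subgroup

theorem pgAdj_one_left {b : G} (hb : b ≠ 1) : pgAdj 1 b :=
  ⟨hb.symm, .inl (one_mem _)⟩

theorem not_pgAdj_of_maximal_isCyclic {b c : G}
    (hb : Maximal (fun K : Subgroup G ↦ IsCyclic K) (zpowers b))
    (hc : Maximal (fun K : Subgroup G ↦ IsCyclic K) (zpowers c))
    (hbc : zpowers b ≠ zpowers c) : ¬ pgAdj b c := by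
  rintro ⟨-, hb_mem | hc_mem⟩
  · exact hbc (hb.eq_of_ge hc.prop (zpowers_le.mpr hb_mem)).symm
  · exact hbc (hc.eq_of_ge hb.prop (zpowers_le.mpr hc_mem))

namespace pgK14Free

theorem ncard_le_three_of_pairwise (h : pgK14Free G) {T : Set G} (h1 : (1 : G) ∉ T)
    (hT : T.Pairwise fun x y ↦ ¬ pgAdj x y) : T.ncard ≤ 3 := by
  by_contra! hlt
  obtain ⟨U, hUT, hU⟩ := Set.exists_subset_card_eq hlt
  obtain ⟨a, b, c, d, hab, hac, had, hbc, hbd, hcd, rfl⟩ := Set.ncard_eq_four.mp hU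
  have mem : a ∈ T ∧ b ∈ T ∧ c ∈ T ∧ d ∈ T := by simp_all [Set.insert_subset_iff]
  have adj : ∀ x ∈ T, pgAdj 1 x := fun x hx ↦ pgAdj_one_left (ne_of_mem_of_not_mem hx h1)
  exact h ⟨1, a, b, c, d, hab, hac, had, hbc, hbd, hcd, adj a mem.1, adj b mem.2.1,
    adj c mem.2.2.1, adj d mem.2.2.2, hT mem.1 mem.2.1 hab, hT mem.1 mem.2.2.1 hac,
    hT mem.1 mem.2.2.2 had, hT mem.2.1 mem.2.2.1 hbc, hT mem.2.1 mem.2.2.2 hbd,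
    hT mem.2.2.1 mem.2.2.2 hcd⟩

theorem ncard_maximal_isCyclic_le_three [Nontrivial G] (h : pgK14Free G) :
    {M : Subgroup G | Maximal (fun K : Subgroup G ↦ IsCyclic K) M}.ncard ≤ 3 := by
  set S := {M : Subgroup G | Maximal (fun K : Subgroup G ↦ IsCyclic K) M}
  choose! gen hgen using fun M (hM : Maximal (fun K : Subgroup G ↦ IsCyclic K) M) ↦
    M.isCyclic_iff_exists_zpowers_eq_top.mp hM.prop
  have hinj : S.InjOn gen := fun M hM N hN e ↦ by rw [← hgen M hM, ← hgen N hN, e]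
  rw [← hinj.ncard_image]
  refine h.ncard_le_three_of_pairwise ?_ ?_
  · rintro ⟨M, hM, hM1⟩
    exact ne_bot_of_maximal_isCyclic hM (by rw [← hgen M hM, hM1, zpowers_one_eq_bot])
  · rintro _ ⟨M, hM, rfl⟩ _ ⟨N, hN, rfl⟩ hne
    refine not_pgAdj_of_maximal_isCyclic ?_ ?_ ?_
    · rwa [hgen M hM]
    · rwa [hgen N hN]
    · rw [hgen M hM, hgen N hN]
      exact fun e ↦ hne (congrArg gen e)

end pgK14Free

end

theorem k14free_three_maximal_cyclic {G : Type*} [Group G] [Finite G]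
    (hnc : ¬ IsCyclic G) (h : pgK14Free G) :
    {H : Subgroup G | IsCyclic H ∧
      ∀ K : Subgroup G, IsCyclic K → H ≤ K → H = K}.ncard = 3 := by
  have : Nontrivial G := not_subsingleton_iff_nontrivial.mp fun _ ↦ hnc isCyclic_of_subsingleton
  simp_rw [← maximal_isCyclic_iff]
  exact le_antisymm h.ncard_maximal_isCyclic_le_three (two_lt_ncard_maximal_isCyclic hnc)
end

section
/- Let G be a finite group. Then the power graph P(G) contains an induced 4-cycle if and only if there exist nontrivial elements x, y ∈ G such that ⟨x⟩ is not contained in ⟨y⟩, ⟨y⟩ is not contained in ⟨x⟩, and the order of ⟨x⟩ ∩ ⟨y⟩ is divisible by at least two distinct primes. -/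
/-- The power graph contains an induced 4-cycle. -/
def pgHasInducedC4 (G : Type*) [Group G] : Prop :=
  ∃ x u y v : G,
    x ≠ u ∧ x ≠ y ∧ x ≠ v ∧ u ≠ y ∧ u ≠ v ∧ y ≠ v ∧
    pgAdj x u ∧ pgAdj u y ∧ pgAdj y v ∧ pgAdj v x ∧
    ¬ pgAdj x y ∧ ¬ pgAdj u v

/-!
Call `x` and `y` incomparable when neither is a power of the other. A common neighbour of an
incomparable pair is either a common power or a common root of both, and in an induced 4-cycle
`x – u – y – v` the two neighbours cannot be of different kinds, since then `u` and `v` would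
be comparable. So an induced 4-cycle is exactly an incomparable pair `{u, v}` inside
`⟨x⟩ ⊓ ⟨y⟩` for an incomparable pair `{x, y}`. In the cyclic group `⟨x⟩ ⊓ ⟨y⟩`, `a` is a power
of `b` iff the order of `a` divides that of `b`, and the divisors of a prime power are totally
ordered; hence an incomparable pair exists there iff its order has two prime divisors
(conversely, take Cauchy elements of orders `p` and `q`).
-/

open Subgroup

theorem Nat.exists_ne_primes_dvd_of_not_dvd_of_not_dvd {m n N : ℕ} (hN : N ≠ 0) (hm : m ∣ N)
    (hn : n ∣ N) (hmn : ¬ m ∣ n) (hnm : ¬ n ∣ m) :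
    ∃ p q : ℕ, p.Prime ∧ q.Prime ∧ p ≠ q ∧ p ∣ N ∧ q ∣ N := by
  by_contra! h
  have hN1 : N ≠ 1 := by
    rintro rfl
    exact hmn (Nat.dvd_one.mp hm ▸ one_dvd n)
  have hp : N.minFac.Prime := minFac_prime hN1
  have hNp : N = N.minFac ^ N.primeFactorsList.length :=
    eq_prime_pow_of_unique_prime_dvd hN fun hd hdN =>
      by_contra fun hne => h _ _ hd hp hne hdN (minFac_dvd N)
  rw [hNp] at hm hn
  obtain ⟨i, -, rfl⟩ := (dvd_prime_pow hp).mp hm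
  obtain ⟨j, -, rfl⟩ := (dvd_prime_pow hp).mp hn
  rcases le_total i j with hij | hji
  · exact hmn (pow_dvd_pow _ hij)
  · exact hnm (pow_dvd_pow _ hji)

section PowerGraph

variable {G : Type*} [Group G]

theorem mem_zpowers_iff_orderOf_dvd [Finite G] {a b c : G} (ha : a ∈ zpowers c)
    (hb : b ∈ zpowers c) : a ∈ zpowers b ↔ orderOf a ∣ orderOf b := by
  refine ⟨orderOf_dvd_of_mem_zpowers, fun h => ?_⟩
  obtain ⟨i, rfl⟩ : ∃ i : ℕ, c ^ i = a := mem_powers_iff_mem_zpowers.mpr ha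
  obtain ⟨j, rfl⟩ : ∃ j : ℕ, c ^ j = b := mem_powers_iff_mem_zpowers.mpr hb
  -- `c ^ gcd (orderOf c) j` generates `⟨c ^ j⟩` (Bézout), and the order condition forces
  -- `gcd (orderOf c) j ∣ i`
  have hg : c ^ (orderOf c).gcd j ∈ zpowers (c ^ j) := by
    refine ⟨Nat.gcdB (orderOf c) j, ?_⟩
    change (c ^ j) ^ Nat.gcdB (orderOf c) j = _
    rw [← zpow_natCast c ((orderOf c).gcd j), Nat.gcd_eq_gcd_ab, zpow_add, zpow_mul, zpow_mul,
      zpow_natCast, zpow_natCast, pow_orderOf_eq_one, one_zpow, one_mul]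
  have hgi : (orderOf c).gcd j ∣ i := by
    have hord : orderOf (c ^ j) = orderOf c / (orderOf c).gcd j := orderOf_pow c
    refine Nat.dvd_of_mul_dvd_mul_right (hord ▸ orderOf_pos (c ^ j)) ?_
    rw [Nat.mul_div_cancel' (Nat.gcd_dvd_left _ j)]
    apply orderOf_dvd_of_pow_eq_one
    rw [pow_mul, ← hord]
    exact orderOf_dvd_iff_pow_eq_one.mp h
  obtain ⟨k, rfl⟩ := hgi
  rw [pow_mul]
  exact pow_mem hg k

theorem exists_ne_primes_dvd_card_of_le_zpowers [Finite G] {H : Subgroup G} {a b c : G}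
    (hH : H ≤ zpowers c) (ha : a ∈ H) (hb : b ∈ H) (hab : a ∉ zpowers b) (hba : b ∉ zpowers a) :
    ∃ p q : ℕ, p.Prime ∧ q.Prime ∧ p ≠ q ∧ p ∣ Nat.card H ∧ q ∣ Nat.card H :=
  Nat.exists_ne_primes_dvd_of_not_dvd_of_not_dvd Nat.card_pos.ne'
    (H.orderOf_dvd_natCard ha) (H.orderOf_dvd_natCard hb)
    (mt (mem_zpowers_iff_orderOf_dvd (hH ha) (hH hb)).mpr hab)
    (mt (mem_zpowers_iff_orderOf_dvd (hH hb) (hH ha)).mpr hba)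

theorem notMem_zpowers_of_orderOf_eq_prime {a b : G} {p q : ℕ} (hp : p.Prime) (hq : q.Prime)
    (hpq : p ≠ q) (ha : orderOf a = p) (hb : orderOf b = q) : a ∉ zpowers b := fun h =>
  hpq <| (Nat.prime_dvd_prime_iff_eq hp hq).mp (ha ▸ hb ▸ orderOf_dvd_of_mem_zpowers h)

theorem pgAdj.symm {x y : G} (h : pgAdj x y) : pgAdj y x :=
  ⟨h.1.symm, h.2.symm⟩

theorem not_pgAdj_iff {x y : G} (h : x ≠ y) :
    ¬ pgAdj x y ↔ x ∉ zpowers y ∧ y ∉ zpowers x := by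
  simp [pgAdj, h]

theorem mem_inf_or_of_pgAdj {x y u : G} (hxy : x ∉ zpowers y) (hyx : y ∉ zpowers x)
    (hxu : pgAdj x u) (huy : pgAdj u y) :
    u ∈ zpowers x ⊓ zpowers y ∨ x ∈ zpowers u ∧ y ∈ zpowers u := by
  rcases hxu.2 with hx | hu <;> rcases huy.2 with hu' | hy
  · exact absurd (zpowers_le_of_mem hu' hx) hxy
  · exact Or.inr ⟨hx, hy⟩
  · exact Or.inl (mem_inf.mpr ⟨hu, hu'⟩)
  · exact absurd (zpowers_le_of_mem hu hy) hyx

theorem pgHasInducedC4_iff_exists_mem_inf :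
    pgHasInducedC4 G ↔ ∃ x y u v : G, x ∉ zpowers y ∧ y ∉ zpowers x ∧
      u ∉ zpowers v ∧ v ∉ zpowers u ∧ u ∈ zpowers x ⊓ zpowers y ∧ v ∈ zpowers x ⊓ zpowers y := by
  constructor
  · rintro ⟨x, u, y, v, -, hxy, -, -, huv, -, hxu, huy, hyv, hvx, nxy, nuv⟩
    obtain ⟨hxy', hyx'⟩ := (not_pgAdj_iff hxy).mp nxy
    obtain ⟨huv', hvu'⟩ := (not_pgAdj_iff huv).mp nuv
    rcases mem_inf_or_of_pgAdj hxy' hyx' hxu huy with hu | ⟨hxu', hyu'⟩ <;>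
      rcases mem_inf_or_of_pgAdj hxy' hyx' hvx.symm hyv.symm with hv | ⟨hxv', hyv'⟩
    · exact ⟨x, y, u, v, hxy', hyx', huv', hvu', hu, hv⟩
    · exact absurd (zpowers_le_of_mem hxv' (mem_inf.mp hu).1) huv'
    · exact absurd (zpowers_le_of_mem hxu' (mem_inf.mp hv).1) hvu'
    · exact ⟨u, v, x, y, huv', hvu', hxy', hyx', mem_inf.mpr ⟨hxu', hxv'⟩,
        mem_inf.mpr ⟨hyu', hyv'⟩⟩
  · rintro ⟨x, y, u, v, hxy, hyx, huv, hvu, hu, hv⟩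
    obtain ⟨hux, huy⟩ := mem_inf.mp hu
    obtain ⟨hvx, hvy⟩ := mem_inf.mp hv
    have hxu : x ≠ u := (ne_of_mem_of_not_mem huy hxy).symm
    have hxv : x ≠ v := (ne_of_mem_of_not_mem hvy hxy).symm
    have hyu : y ≠ u := (ne_of_mem_of_not_mem hux hyx).symm
    have hyv : y ≠ v := (ne_of_mem_of_not_mem hvx hyx).symm
    have hxy' : x ≠ y := (ne_of_mem_of_not_mem (mem_zpowers y) hxy).symm
    have huv' : u ≠ v := (ne_of_mem_of_not_mem (mem_zpowers v) huv).symm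
    exact ⟨x, u, y, v, hxu, hxy', hxv, hyu.symm, huv', hyv, ⟨hxu, .inr hux⟩, ⟨hyu.symm, .inl huy⟩,
      ⟨hyv, .inr hvy⟩, ⟨hxv.symm, .inl hvx⟩, fun h => h.2.elim hxy hyx,
      fun h => h.2.elim huv hvu⟩

end PowerGraph

theorem hasInducedC4_iff {G : Type*} [Group G] [Finite G] :
    pgHasInducedC4 G ↔
      ∃ x y : G, x ≠ 1 ∧ y ≠ 1 ∧
        ¬ Subgroup.zpowers x ≤ Subgroup.zpowers y ∧
        ¬ Subgroup.zpowers y ≤ Subgroup.zpowers x ∧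
        ∃ p q : ℕ, p.Prime ∧ q.Prime ∧ p ≠ q ∧
          p ∣ Nat.card (Subgroup.zpowers x ⊓ Subgroup.zpowers y : Subgroup G) ∧
          q ∣ Nat.card (Subgroup.zpowers x ⊓ Subgroup.zpowers y : Subgroup G) := by
  simp only [pgHasInducedC4_iff_exists_mem_inf, zpowers_le]
  constructor
  · rintro ⟨x, y, u, v, hxy, hyx, huv, hvu, hu, hv⟩
    exact ⟨x, y, (ne_of_mem_of_not_mem (one_mem _) hxy).symm,
      (ne_of_mem_of_not_mem (one_mem _) hyx).symm, hxy, hyx,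
      exists_ne_primes_dvd_card_of_le_zpowers inf_le_left hu hv huv hvu⟩
  · rintro ⟨x, y, -, -, hxy, hyx, p, q, hp, hq, hpq, hpd, hqd⟩
    obtain ⟨u, hu⟩ := exists_prime_orderOf_dvd_card' (hp := ⟨hp⟩) p hpd
    obtain ⟨v, hv⟩ := exists_prime_orderOf_dvd_card' (hp := ⟨hq⟩) q hqd
    have hu' : orderOf (u : G) = p := (orderOf_coe u).trans hu
    have hv' : orderOf (v : G) = q := (orderOf_coe v).trans hv
    exact ⟨x, y, u, v, hxy, hyx, notMem_zpowers_of_orderOf_eq_prime hp hq hpq hu' hv',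
      notMem_zpowers_of_orderOf_eq_prime hq hp hpq.symm hv' hu', u.2, v.2⟩
end

section
/- Let G be a finite group in which every nontrivial element has prime power order. Then the power graph P(G) is C_4-free, i.e. contains no induced 4-cycle. -/
/-- The power graph is `C₄`-free. -/
def pgC4Free (G : Type*) [Group G] : Prop := ¬ pgHasInducedC4 G

/-! If `c` has order `p ^ k`, then `⟨c ^ i⟩ = ⟨c ^ gcd (p ^ k, i)⟩ = ⟨c ^ p ^ s⟩` for some `s`, so the
cyclic subgroups of `⟨c⟩` form a chain. Under the hypothesis, "`a` is a power of `b`" is therefore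
a preorder in which the elements below any given one are pairwise comparable, and the power graph
is its comparability graph. In an induced 4-cycle every vertex then has at most one neighbour below
it, so the four edges are oriented cyclically and transitivity makes opposite vertices
comparable. -/

open Subgroup Relation

theorem zpowers_zpow_eq_zpowers_pow_gcd {G : Type*} [Group G] (c : G) (k : ℤ) :
    zpowers (c ^ k) = zpowers (c ^ Int.gcd (orderOf c) k) := by
  set g := Int.gcd (orderOf c) k
  apply le_antisymm
  · apply zpowers_le_of_mem
    obtain ⟨m, hm⟩ := Int.gcd_dvd_right (orderOf c) k
    rw [hm, zpow_mul, zpow_natCast]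
    exact zpow_mem_zpowers _ _
  · apply zpowers_le_of_mem
    have bezout : c ^ (g : ℤ) = (c ^ k) ^ Int.gcdB (orderOf c) k := by
      rw [Int.gcd_eq_gcd_ab, zpow_add, zpow_mul, zpow_mul, zpow_natCast, pow_orderOf_eq_one,
        one_zpow, one_mul]
    rw [← zpow_natCast, bezout]
    exact zpow_mem_zpowers _ _

theorem pow_mem_zpowers_pow_of_dvd {G : Type*} [Group G] (c : G) {m n : ℕ} (h : m ∣ n) :
    c ^ n ∈ zpowers (c ^ m) := by
  obtain ⟨r, rfl⟩ := h
  rw [pow_mul]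
  exact npow_mem_zpowers _ _

theorem exists_zpowers_eq_zpowers_pow_prime_pow {G : Type*} [Group G] {c a : G} {p k : ℕ}
    (hp : p.Prime) (hc : orderOf c = p ^ k) (ha : a ∈ zpowers c) :
    ∃ s, zpowers a = zpowers (c ^ p ^ s) := by
  obtain ⟨i, rfl⟩ := mem_zpowers_iff.mp ha
  have hdvd : Int.gcd (p ^ k : ℕ) i ∣ p ^ k := Int.gcd_dvd_natAbs_left _ _
  obtain ⟨s, -, hs⟩ := (Nat.dvd_prime_pow hp).mp hdvd
  exact ⟨s, by rw [zpowers_zpow_eq_zpowers_pow_gcd, hc, hs]⟩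

theorem symmGen_mem_zpowers_of_isPrimePow {G : Type*} [Group G] {a b c : G}
    (hc : IsPrimePow (orderOf c)) (ha : a ∈ zpowers c) (hb : b ∈ zpowers c) :
    SymmGen (fun x y => x ∈ zpowers y) a b := by
  obtain ⟨p, k, hp, -, hpk⟩ := hc
  obtain ⟨s, hs⟩ := exists_zpowers_eq_zpowers_pow_prime_pow hp.nat_prime hpk.symm ha
  obtain ⟨t, ht⟩ := exists_zpowers_eq_zpowers_pow_prime_pow hp.nat_prime hpk.symm hb
  rw [SymmGen, ← zpowers_le, ← zpowers_le, hs, ht, zpowers_le, zpowers_le]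
  rcases le_total s t with hst | hts
  · exact Or.inr (pow_mem_zpowers_pow_of_dvd c (pow_dvd_pow p hst))
  · exact Or.inl (pow_mem_zpowers_pow_of_dvd c (pow_dvd_pow p hts))

theorem Relation.symmGen_or_symmGen_of_square {α : Type*} {r : α → α → Prop}
    [IsTrans α r] (hchain : ∀ a b c, r a c → r b c → SymmGen r a b) {x u y v : α}
    (hxu : SymmGen r x u) (huy : SymmGen r u y) (hyv : SymmGen r y v) (hvx : SymmGen r v x) :
    SymmGen r x y ∨ SymmGen r u v := by
  rcases hxu with hxu | hux
  · rcases huy with huy | hyu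
    · exact Or.inl (Or.inl (_root_.trans hxu huy))
    · exact Or.inl (hchain x y u hxu hyu)
  · rcases hvx with hvx | hxv
    · exact Or.inr (hchain u v x hux hvx)
    · rcases hyv with hyv | hvy
      · exact Or.inl (hchain x y v hxv hyv)
      · exact Or.inl (Or.inl (_root_.trans hxv hvy))

theorem c4free_of_prime_power_orders_general {G : Type*} [Group G]
    (h : ∀ x : G, x ≠ 1 → IsPrimePow (orderOf x)) :
    pgC4Free G := by
  have : IsTrans G fun a b => a ∈ zpowers b :=
    ⟨fun _ _ _ hab hbc => zpowers_le_of_mem hbc hab⟩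
  have hchain (a b c : G) (ha : a ∈ zpowers c) (hb : b ∈ zpowers c) :
      SymmGen (fun x y => x ∈ zpowers y) a b := by
    rcases eq_or_ne c 1 with rfl | hc
    · rw [zpowers_one_eq_bot, mem_bot] at ha
      exact Or.inl (ha ▸ one_mem _)
    · exact symmGen_mem_zpowers_of_isPrimePow (h c hc) ha hb
  rintro ⟨x, u, y, v, -, hxy, -, -, huv, -, ⟨-, hxu⟩, ⟨-, huy⟩, ⟨-, hyv⟩, ⟨-, hvx⟩, nxy, nuv⟩
  rcases symmGen_or_symmGen_of_square hchain hxu huy hyv hvx with hxy' | huv'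
  · exact nxy ⟨hxy, hxy'⟩
  · exact nuv ⟨huv, huv'⟩

theorem c4free_of_prime_power_orders {G : Type*} [Group G] [Finite G]
    (h : ∀ x : G, x ≠ 1 → IsPrimePow (orderOf x)) :
    pgC4Free G :=
  c4free_of_prime_power_orders_general h
end

section
/- Let G be a finite group whose power graph P(G) is C_4-free. Then every nontrivial element x ∈ G has order of the form p^m, p^m q, or pqr, where p, q, r are distinct primes and m is a positive integer. -/
/-!
Inside the cyclic group `⟨x⟩` of order `n`, for each divisor `d ∣ n` the element `x ^ (n / d)`
has order `d`, and one such element is a power of another exactly when the orders divide one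
another. So an induced `C₄` in the power graph comes from two incomparable divisors `a, b` of `n`
with two incomparable common divisors `c, d`. Taking `c = p`, `d = q` distinct primes and
`a = pqr`, `b = pqs` with distinct primes `r, s`, a `C₄`-free power graph forces, for every pair
of distinct primes `p, q ∣ n`, the cofactor `n / pq` to be a prime power `r ^ j`, with `j ≤ 1`
unless `r ∈ {p, q}`. This leaves only the orders `p ^ m`, `p ^ m q` and `pqr`.
-/

section PowerGraph

variable {G : Type*} [Group G] {x : G}

lemma pow_orderOf_div_mem_zpowers_iff (hx : orderOf x ≠ 0) {c d : ℕ} (hc : c ∣ orderOf x)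
    (hd : d ∣ orderOf x) :
    x ^ (orderOf x / c) ∈ Subgroup.zpowers (x ^ (orderOf x / d)) ↔ c ∣ d := by
  refine ⟨fun h => ?_, fun hcd => ?_⟩
  · simpa only [orderOf_pow_orderOf_div hx hc, orderOf_pow_orderOf_div hx hd] using
      orderOf_dvd_of_mem_zpowers h
  · rw [← Nat.div_mul_div hd hcd, pow_mul]
    exact Subgroup.npow_mem_zpowers _ _

lemma pow_orderOf_div_inj (hx : orderOf x ≠ 0) {c d : ℕ} (hc : c ∣ orderOf x)
    (hd : d ∣ orderOf x) : x ^ (orderOf x / c) = x ^ (orderOf x / d) ↔ c = d := by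
  refine ⟨fun h => ?_, fun h => h ▸ rfl⟩
  rw [← orderOf_pow_orderOf_div hx hc, ← orderOf_pow_orderOf_div hx hd, h]

lemma pgAdj_pow_orderOf_div_iff (hx : orderOf x ≠ 0) {c d : ℕ} (hc : c ∣ orderOf x)
    (hd : d ∣ orderOf x) :
    pgAdj (x ^ (orderOf x / c)) (x ^ (orderOf x / d)) ↔ c ≠ d ∧ (c ∣ d ∨ d ∣ c) := by
  rw [pgAdj, Ne, pow_orderOf_div_inj hx hc hd, pow_orderOf_div_mem_zpowers_iff hx hc hd,
    pow_orderOf_div_mem_zpowers_iff hx hd hc]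

lemma pgHasInducedC4_of_dvd (hx : orderOf x ≠ 0) {a b c d : ℕ} (ha : a ∣ orderOf x)
    (hb : b ∣ orderOf x) (hca : c ∣ a) (hcb : c ∣ b) (hda : d ∣ a) (hdb : d ∣ b)
    (hab : ¬ a ∣ b) (hba : ¬ b ∣ a) (hcd : ¬ c ∣ d) (hdc : ¬ d ∣ c) : pgHasInducedC4 G := by
  have hc := hca.trans ha
  have hd := hda.trans ha
  have hne : ∀ {u v : ℕ}, ¬ u ∣ v → u ≠ v := fun h huv => h (huv ▸ dvd_rfl)
  set e : ℕ → G := fun k => x ^ (orderOf x / k)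
  have he : ∀ {u v : ℕ}, u ∣ orderOf x → v ∣ orderOf x → u ≠ v → e u ≠ e v :=
    fun hu hv huv h => huv ((pow_orderOf_div_inj hx hu hv).mp h)
  have hadj : ∀ {u v : ℕ}, u ∣ orderOf x → v ∣ orderOf x →
      (pgAdj (e u) (e v) ↔ u ≠ v ∧ (u ∣ v ∨ v ∣ u)) :=
    fun hu hv => pgAdj_pow_orderOf_div_iff hx hu hv
  have hac : a ≠ c := fun h => hab (h ▸ hcb)
  have had : a ≠ d := fun h => hab (h ▸ hdb)
  have hbc : b ≠ c := fun h => hba (h ▸ hca)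
  have hbd : b ≠ d := fun h => hba (h ▸ hda)
  refine ⟨e a, e c, e b, e d, he ha hc hac, he ha hb (hne hab), he ha hd had,
    he hc hb hbc.symm, he hc hd (hne hcd), he hb hd hbd, (hadj ha hc).mpr ⟨hac, .inr hca⟩,
    (hadj hc hb).mpr ⟨hbc.symm, .inl hcb⟩, (hadj hb hd).mpr ⟨hbd, .inr hdb⟩,
    (hadj hd ha).mpr ⟨had.symm, .inl hda⟩, ?_, ?_⟩
  · rw [hadj ha hb]; tauto
  · rw [hadj hc hd]; tauto

lemma pgHasInducedC4_of_mul_prime_dvd (hx : orderOf x ≠ 0) {p q r s : ℕ} (hp : p.Prime)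
    (hq : q.Prime) (hr : r.Prime) (hs : s.Prime) (hpq : p ≠ q) (hrs : r ≠ s)
    (hpqr : p * q * r ∣ orderOf x) (hpqs : p * q * s ∣ orderOf x) : pgHasInducedC4 G := by
  have hpq0 : 0 < p * q := Nat.mul_pos hp.pos hq.pos
  refine pgHasInducedC4_of_dvd hx hpqr hpqs (c := p) (d := q) ?_ ?_ ?_ ?_ ?_ ?_ ?_ ?_
  · exact (dvd_mul_right p q).mul_right r
  · exact (dvd_mul_right p q).mul_right s
  · exact (dvd_mul_left q p).mul_right r
  · exact (dvd_mul_left q p).mul_right s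
  · rw [Nat.mul_dvd_mul_iff_left hpq0, Nat.prime_dvd_prime_iff_eq hr hs]; exact hrs
  · rw [Nat.mul_dvd_mul_iff_left hpq0, Nat.prime_dvd_prime_iff_eq hs hr]; exact hrs.symm
  · rw [Nat.prime_dvd_prime_iff_eq hp hq]; exact hpq
  · rw [Nat.prime_dvd_prime_iff_eq hq hp]; exact hpq.symm

end PowerGraph

section Arithmetic

lemma exists_prime_ne_ne (a b : ℕ) : ∃ r, r.Prime ∧ a ≠ r ∧ b ≠ r := by
  obtain ⟨r, hr, hrp⟩ := Nat.exists_infinite_primes (a + b + 1)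
  exact ⟨r, hrp, by omega, by omega⟩

variable {n : ℕ} (H : ∀ {p q r s : ℕ}, p.Prime → q.Prime → r.Prime → s.Prime → p ≠ q → r ≠ s →
  p * q * r ∣ n → ¬ p * q * s ∣ n)
include H

lemma exists_eq_mul_mul_prime_pow {p q : ℕ} (hp : p.Prime) (hq : q.Prime) (hpq : p ≠ q)
    (hn : n ≠ 0) (hpqn : p * q ∣ n) : ∃ r j, r.Prime ∧ n = p * q * r ^ j := by
  obtain ⟨k, rfl⟩ := hpqn
  have hk : k ≠ 0 := right_ne_zero_of_mul hn
  by_cases hk1 : k = 1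
  · exact ⟨2, 0, Nat.prime_two, by rw [hk1, pow_zero]⟩
  have hr := Nat.minFac_prime hk1
  refine ⟨k.minFac, _, hr, congrArg _ (Nat.eq_prime_pow_of_unique_prime_dvd hk fun hs hsk => ?_)⟩
  by_contra hsr
  exact H hp hq hr hs hpq (Ne.symm hsr) (mul_dvd_mul_left _ k.minFac_dvd) (mul_dvd_mul_left _ hsk)

lemma exists_eq_prime_pow_or_pow_mul_or_mul_mul_of_eq_mul_mul_pow {p q r j : ℕ} (hp : p.Prime)
    (hq : q.Prime) (hr : r.Prime) (hpq : p ≠ q) (hn : n = p * q * r ^ j) :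
    ∃ p q r m : ℕ, p.Prime ∧ q.Prime ∧ r.Prime ∧ p ≠ q ∧ p ≠ r ∧ q ≠ r ∧ 0 < m ∧
      (n = p ^ m ∨ n = p ^ m * q ∨ n = p * q * r) := by
  obtain ⟨t, ht, hpt, hqt⟩ := exists_prime_ne_ne p q
  obtain rfl | hrp := eq_or_ne r p
  · exact ⟨r, q, t, j + 1, hr, hq, ht, hpq, hpt, hqt, j.succ_pos, .inr (.inl (by rw [hn]; ring))⟩
  obtain rfl | hrq := eq_or_ne r q
  · exact ⟨r, p, t, j + 1, hr, hp, ht, hpq.symm, hqt, hpt, j.succ_pos,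
      .inr (.inl (by rw [hn]; ring))⟩
  match j with
  | 0 => exact ⟨p, q, t, 1, hp, hq, ht, hpq, hpt, hqt, one_pos, .inr (.inl (by rw [hn]; ring))⟩
  | 1 =>
    exact ⟨p, q, r, 1, hp, hq, hr, hpq, hrp.symm, hrq.symm, one_pos, .inr (.inr (by simp [hn]))⟩
  | j + 2 =>
    exact (H hp hr hq hr hrp.symm hrq.symm ⟨r ^ (j + 1), by rw [hn]; ring⟩
      ⟨q * r ^ j, by rw [hn]; ring⟩).elim

lemma exists_eq_prime_pow_or_pow_mul_or_mul_mul (hn0 : n ≠ 0) (hn1 : n ≠ 1) :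
    ∃ p q r m : ℕ, p.Prime ∧ q.Prime ∧ r.Prime ∧ p ≠ q ∧ p ≠ r ∧ q ≠ r ∧ 0 < m ∧
      (n = p ^ m ∨ n = p ^ m * q ∨ n = p * q * r) := by
  have hp := Nat.minFac_prime hn1
  by_cases hq : ∃ q, q.Prime ∧ q ∣ n ∧ q ≠ n.minFac
  · obtain ⟨q, hq, hqn, hqp⟩ := hq
    have hpqn : n.minFac * q ∣ n :=
      ((Nat.coprime_primes hp hq).mpr hqp.symm).mul_dvd_of_dvd_of_dvd n.minFac_dvd hqn
    obtain ⟨r, j, hr, hn⟩ := exists_eq_mul_mul_prime_pow H hp hq hqp.symm hn0 hpqn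
    exact exists_eq_prime_pow_or_pow_mul_or_mul_mul_of_eq_mul_mul_pow H hp hq hr hqp.symm hn
  push Not at hq
  have hn := Nat.eq_prime_pow_of_unique_prime_dvd hn0 fun hq' hqn => hq _ hq' hqn
  obtain ⟨q, hq, hpq, -⟩ := exists_prime_ne_ne n.minFac n.minFac
  obtain ⟨r, hr, hpr, hqr⟩ := exists_prime_ne_ne n.minFac q
  refine ⟨n.minFac, q, r, _, hp, hq, hr, hpq, hpr, hqr, Nat.pos_of_ne_zero fun h0 => ?_, .inl hn⟩
  exact hn1 (by rw [hn, h0, pow_zero])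

end Arithmetic

theorem element_orders_of_c4free {G : Type*} [Group G] [Finite G]
    (h : pgC4Free G) (x : G) (hx : x ≠ 1) :
    ∃ p q r m : ℕ, p.Prime ∧ q.Prime ∧ r.Prime ∧
      p ≠ q ∧ p ≠ r ∧ q ≠ r ∧ 0 < m ∧
      (orderOf x = p ^ m ∨ orderOf x = p ^ m * q ∨ orderOf x = p * q * r) := by
  have hx0 : orderOf x ≠ 0 := (orderOf_pos x).ne'
  refine exists_eq_prime_pow_or_pow_mul_or_mul_mul (fun hp hq hr hs hpq hrs hpqr hpqs => ?_) hx0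
    (orderOf_eq_one_iff.not.mpr hx)
  exact h (pgHasInducedC4_of_mul_prime_dvd hx0 hp hq hr hs hpq hrs hpqr hpqs)
end

section
/- Let G be a finite group whose power graph P(G) is C_4-free, and let x ∈ G be an element of order pqr, where p, q, r are distinct primes. Then the centralizer of x in G equals the cyclic subgroup generated by x, i.e. C_G(x) = ⟨x⟩. -/
/-!
Suppose `y` commutes with `x` but `y ∉ ⟨x⟩`. A power of `y` of minimal order outside `⟨x⟩` has
order `s` or `s²` for a prime `s`, with its `s`-th power in `⟨x⟩` (the order of `x` is
squarefree). Multiplying it by a power `u` of `x` of order coprime to `s` gives `b` with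
`b ∉ ⟨x⟩`, `x ∉ ⟨b⟩`, such that `⟨x⟩ ∩ ⟨b⟩` contains elements `c`, `d` of two distinct prime
orders; then `x - c - b - d` is an induced 4-cycle of the power graph.
-/

open Subgroup

section

variable {G : Type*} [Group G]

lemma orderOf_pow_of_orderOf_eq_mul {x : G} {a b : ℕ} (h : orderOf x = a * b) (ha : a ≠ 0) :
    orderOf (x ^ a) = b := by
  rw [orderOf_pow_of_dvd ha (h ▸ dvd_mul_right a b), h,
    Nat.mul_div_cancel_left b (Nat.pos_of_ne_zero ha)]

lemma notMem_zpowers_of_orderOf_prime {c d : G} {ℓ₁ ℓ₂ : ℕ} (hℓ₁ : ℓ₁.Prime) (hℓ₂ : ℓ₂.Prime)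
    (hne : ℓ₁ ≠ ℓ₂) (hc : orderOf c = ℓ₁) (hd : orderOf d = ℓ₂) : c ∉ zpowers d := fun hcd =>
  hne <| (Nat.prime_dvd_prime_iff_eq hℓ₁ hℓ₂).mp (hc ▸ hd ▸ orderOf_dvd_of_mem_zpowers hcd)

lemma Nat.Prime.not_dvd_mul_of_ne {s q r : ℕ} (hs : s.Prime) (hq : q.Prime) (hr : r.Prime)
    (hsq : s ≠ q) (hsr : s ≠ r) : ¬ s ∣ q * r := fun h =>
  (hs.dvd_mul.mp h).elim (fun h => hsq ((Nat.prime_dvd_prime_iff_eq hs hq).mp h))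
    (fun h => hsr ((Nat.prime_dvd_prime_iff_eq hs hr).mp h))

lemma Subgroup.mem_of_pow_mem_of_coprime (H : Subgroup G) {y : G} {a b : ℕ} (hab : a.Coprime b)
    (ha : y ^ a ∈ H) (hb : y ^ b ∈ H) : y ∈ H := by
  obtain ⟨u, v, huv⟩ := Nat.isCoprime_iff_coprime.mpr hab
  have hy : y = (y ^ a) ^ u * (y ^ b) ^ v := by
    rw [← zpow_natCast, ← zpow_natCast, ← zpow_mul, ← zpow_mul, ← zpow_add, mul_comm (a : ℤ),
      mul_comm (b : ℤ), huv, zpow_one]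
  rw [hy]
  exact mul_mem (zpow_mem ha u) (zpow_mem hb v)

lemma Commute.mem_zpowers_mul_left {g h : G} (hgh : Commute g h)
    (hco : (orderOf g).Coprime (orderOf h)) : g ∈ zpowers (g * h) := by
  have hpow : (g * h) ^ orderOf h = g ^ orderOf h := by
    rw [hgh.mul_pow, pow_orderOf_eq_one, mul_one]
  have hg : g ∈ zpowers (g ^ orderOf h) := mem_zpowers_pow_iff.mpr hco.symm
  exact zpowers_le.mpr (hpow ▸ npow_mem_zpowers _ _) hg

lemma Commute.mem_zpowers_mul_right {g h : G} (hgh : Commute g h)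
    (hco : (orderOf g).Coprime (orderOf h)) : h ∈ zpowers (g * h) :=
  hgh.eq ▸ hgh.symm.mem_zpowers_mul_left hco.symm

/-- Take a power `z` of `y` of minimal order outside `H`: its order has a single prime factor,
since two coprime exponents with `z ^ a, z ^ b ∈ H` would put `z` in `H` by Bézout. -/
lemma Subgroup.exists_mem_zpowers_notMem_orderOf_eq_prime_pow (H : Subgroup G) {y : G}
    (hfin : IsOfFinOrder y) (hy : y ∉ H) :
    ∃ z ∈ zpowers y, z ∉ H ∧ ∃ s k : ℕ, s.Prime ∧ orderOf z = s ^ (k + 1) ∧ z ^ s ∈ H := by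
  induction hn : orderOf y using Nat.strong_induction_on generalizing y with
  | _ n ih =>
  by_cases hdesc : ∃ ℓ, ℓ.Prime ∧ ℓ ∣ n ∧ y ^ ℓ ∉ H
  · obtain ⟨ℓ, hℓ, hℓn, hyℓ⟩ := hdesc
    have hlt : orderOf (y ^ ℓ) < n := by
      rw [orderOf_pow_of_dvd hℓ.ne_zero (hn ▸ hℓn), hn]
      exact Nat.div_lt_self (hn ▸ hfin.orderOf_pos) hℓ.one_lt
    obtain ⟨z, hz, hzH⟩ := ih _ hlt hfin.pow hyℓ rfl
    exact ⟨z, zpowers_le.mpr (npow_mem_zpowers y ℓ) hz, hzH⟩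
  · push Not at hdesc
    have hn1 : n ≠ 1 := fun h1 => hy (orderOf_eq_one_iff.mp (hn.trans h1) ▸ H.one_mem)
    have hprimePow : IsPrimePow n := by
      refine isPrimePow_iff_unique_prime_dvd.mpr ?_
      obtain ⟨s, hs, hsn⟩ := Nat.exists_prime_and_dvd hn1
      refine ⟨s, ⟨hs, hsn⟩, fun ℓ ⟨hℓ, hℓn⟩ => ?_⟩
      by_contra hne
      exact hy (H.mem_of_pow_mem_of_coprime ((Nat.coprime_primes hℓ hs).mpr hne)
        (hdesc ℓ hℓ hℓn) (hdesc s hs hsn))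
    obtain ⟨s, k, hs, hk, rfl⟩ := (isPrimePow_nat_iff _).mp hprimePow
    obtain ⟨k, rfl⟩ := Nat.exists_eq_add_of_lt hk
    refine ⟨y, mem_zpowers y, hy, s, k, hs, by rw [hn, zero_add], hdesc s hs ?_⟩
    exact dvd_pow_self s (Nat.succ_ne_zero _)

lemma pgHasInducedC4_of_mem_zpowers {a b c d : G} (hab : a ∉ zpowers b) (hba : b ∉ zpowers a)
    (hcd : c ∉ zpowers d) (hdc : d ∉ zpowers c) (hca : c ∈ zpowers a) (hcb : c ∈ zpowers b)
    (hda : d ∈ zpowers a) (hdb : d ∈ zpowers b) : pgHasInducedC4 G := by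
  have hac : a ≠ c := (ne_of_mem_of_not_mem hcb hab).symm
  have hab' : a ≠ b := ne_of_mem_of_not_mem (mem_zpowers a) hba
  have had : a ≠ d := (ne_of_mem_of_not_mem hdb hab).symm
  have hcb' : c ≠ b := ne_of_mem_of_not_mem hca hba
  have hcd' : c ≠ d := ne_of_mem_of_not_mem (mem_zpowers c) hdc
  have hbd : b ≠ d := (ne_of_mem_of_not_mem hda hba).symm
  exact ⟨a, c, b, d, hac, hab', had, hcb', hcd', hbd, ⟨hac, .inr hca⟩, ⟨hcb', .inl hcb⟩,
    ⟨hbd, .inr hdb⟩, ⟨had.symm, .inl hda⟩, fun h => h.2.elim hab hba, fun h => h.2.elim hcd hdc⟩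

lemma pgC4Free.mem_zpowers_of_orderOf_prime_mem_zpowers (hG : pgC4Free G) {a b c d : G}
    {ℓ₁ ℓ₂ : ℕ} (hℓ₁ : ℓ₁.Prime) (hℓ₂ : ℓ₂.Prime) (hne : ℓ₁ ≠ ℓ₂) (hc : orderOf c = ℓ₁)
    (hd : orderOf d = ℓ₂) (hba : b ∉ zpowers a) (hca : c ∈ zpowers a) (hcb : c ∈ zpowers b)
    (hda : d ∈ zpowers a) (hdb : d ∈ zpowers b) : a ∈ zpowers b := by
  by_contra hab
  exact hG (pgHasInducedC4_of_mem_zpowers hab hba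
    (notMem_zpowers_of_orderOf_prime hℓ₁ hℓ₂ hne hc hd)
    (notMem_zpowers_of_orderOf_prime hℓ₂ hℓ₁ hne.symm hd hc) hca hcb hda hdb)

lemma pgC4Free.false_of_commute_of_orderOf_prime [Finite G] (hG : pgC4Free G) {p q r s : ℕ}
    (hp : p.Prime) (hq : q.Prime) (hr : r.Prime) (hs : s.Prime) (hqr : q ≠ r) (hsq : s ≠ q)
    (hsr : s ≠ r) {x y : G} (hx : orderOf x = p * q * r) (hxy : Commute x y)
    (hy : orderOf y = s) (hyx : y ∉ zpowers x) : False := by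
  set u := x ^ p
  have hu : orderOf u = q * r := orderOf_pow_of_orderOf_eq_mul (by rw [hx, mul_assoc]) hp.ne_zero
  have huy : (orderOf u).Coprime (orderOf y) := by
    rw [hu, hy]
    exact Nat.Coprime.mul_left ((Nat.coprime_primes hq hs).mpr hsq.symm)
      ((Nat.coprime_primes hr hs).mpr hsr.symm)
  have hux : zpowers u ≤ zpowers x := zpowers_le.mpr (npow_mem_zpowers x p)
  have hub : zpowers u ≤ zpowers (u * y) :=
    zpowers_le.mpr ((hxy.pow_left p).mem_zpowers_mul_left huy)
  have hbx : u * y ∉ zpowers x := fun h => hyx ((mul_mem_cancel_left (hux (mem_zpowers u))).mp h)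
  have hur : orderOf (u ^ q) = r := orderOf_pow_of_orderOf_eq_mul hu hq.ne_zero
  have huq : orderOf (u ^ r) = q := orderOf_pow_of_orderOf_eq_mul (hu.trans (mul_comm q r))
    hr.ne_zero
  have hxb : x ∈ zpowers (u * y) :=
    hG.mem_zpowers_of_orderOf_prime_mem_zpowers hr hq hqr.symm hur huq hbx
      (hux (npow_mem_zpowers u q)) (hub (npow_mem_zpowers u q))
      (hux (npow_mem_zpowers u r)) (hub (npow_mem_zpowers u r))
  have hb : orderOf (u * y) = q * r * s := by
    rw [(hxy.pow_left p).orderOf_mul_eq_mul_orderOf_of_coprime huy, hu, hy]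
  -- `⟨x⟩ ≤ ⟨u * y⟩` forces `p ∣ s`, so both cyclic groups have order `p * q * r` and coincide.
  have hps : p = s := by
    have hdvd : q * r * p ∣ q * r * s := by
      rw [← hb, show q * r * p = p * q * r by ring, ← hx]
      exact orderOf_dvd_of_mem_zpowers hxb
    exact (Nat.prime_dvd_prime_iff_eq hp hs).mp
      (Nat.dvd_of_mul_dvd_mul_left (Nat.mul_pos hq.pos hr.pos) hdvd)
  have heq : zpowers x = zpowers (u * y) := by
    refine eq_of_le_of_card_ge (zpowers_le.mpr hxb) ?_
    rw [Nat.card_zpowers, Nat.card_zpowers, hb, hx, hps]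
    exact le_of_eq (by ring)
  exact hbx (heq ▸ mem_zpowers _)

lemma pgC4Free.false_of_commute_of_orderOf_sq (hG : pgC4Free G) {p q r : ℕ} (hp : p.Prime)
    (hq : q.Prime) (hr : r.Prime) (hpq : p ≠ q) (hpr : p ≠ r) (hqr : q ≠ r) {x y : G}
    (hx : orderOf x = p * q * r) (hxy : Commute x y) (hy : orderOf y = p ^ 2)
    (hyp : y ^ p ∈ zpowers x) (hyx : y ∉ zpowers x) : False := by
  set u := x ^ (p * r)
  have hu : orderOf u = q :=
    orderOf_pow_of_orderOf_eq_mul (by rw [hx]; ring) (mul_ne_zero hp.ne_zero hr.ne_zero)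
  have huy : (orderOf u).Coprime (orderOf y) := by
    rw [hu, hy]
    exact Nat.Coprime.pow_right 2 ((Nat.coprime_primes hq hp).mpr hpq.symm)
  have hux : u ∈ zpowers x := npow_mem_zpowers x _
  have hbx : u * y ∉ zpowers x := fun h => hyx ((mul_mem_cancel_left hux).mp h)
  have hyb : zpowers y ≤ zpowers (u * y) :=
    zpowers_le.mpr ((hxy.pow_left _).mem_zpowers_mul_right huy)
  have hxb : x ∈ zpowers (u * y) :=
    hG.mem_zpowers_of_orderOf_prime_mem_zpowers hp hq hpq
      (orderOf_pow_of_orderOf_eq_mul (hy.trans (sq p)) hp.ne_zero) hu hbx hyp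
      (hyb (npow_mem_zpowers y p)) hux ((hxy.pow_left _).mem_zpowers_mul_left huy)
  have hdvd : p * q * r ∣ q * p ^ 2 := by
    rw [← hx, ← hu, ← hy, ← (hxy.pow_left _).orderOf_mul_eq_mul_orderOf_of_coprime huy]
    exact orderOf_dvd_of_mem_zpowers hxb
  rcases hr.dvd_mul.mp ((Dvd.intro_left _ rfl).trans hdvd) with hrq | hrp
  · exact hqr ((Nat.prime_dvd_prime_iff_eq hr hq).mp hrq).symm
  · exact hpr ((Nat.prime_dvd_prime_iff_eq hr hp).mp (hr.dvd_of_dvd_pow hrp)).symm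

lemma pgC4Free.false_of_commute_of_orderOf_prime_pow [Finite G] (hG : pgC4Free G)
    {p q r s k : ℕ} (hp : p.Prime) (hq : q.Prime) (hr : r.Prime) (hs : s.Prime) (hpq : p ≠ q)
    (hpr : p ≠ r) (hqr : q ≠ r) (hsq : s ≠ q) (hsr : s ≠ r) {x y : G}
    (hx : orderOf x = p * q * r) (hxy : Commute x y) (hy : orderOf y = s ^ (k + 1))
    (hys : y ^ s ∈ zpowers x) (hyx : y ∉ zpowers x) : False := by
  rcases k with _ | k
  · exact hG.false_of_commute_of_orderOf_prime hp hq hr hs hqr hsq hsr hx hxy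
      (hy.trans (pow_one s)) hyx
  have hdvd : s ^ (k + 1) ∣ p * q * r := by
    rw [← hx, ← orderOf_pow_of_orderOf_eq_mul (hy.trans (pow_succ' s (k + 1))) hs.ne_zero]
    exact orderOf_dvd_of_mem_zpowers hys
  have hsp : s = p := by
    rw [mul_assoc] at hdvd
    rcases hs.dvd_mul.mp ((dvd_pow_self s k.succ_ne_zero).trans hdvd) with hsp | hsqr
    · exact (Nat.prime_dvd_prime_iff_eq hs hp).mp hsp
    · exact absurd hsqr (hs.not_dvd_mul_of_ne hq hr hsq hsr)
  subst hsp
  rcases k with _ | k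
  · exact hG.false_of_commute_of_orderOf_sq hs hq hr hpq hpr hqr hx hxy hy hys hyx
  · have hsq_dvd : s * s ∣ s * (q * r) := by
      rw [← mul_assoc, ← sq]
      exact (pow_dvd_pow s (by omega : 2 ≤ k + 1 + 1)).trans hdvd
    exact hs.not_dvd_mul_of_ne hq hr hsq hsr (Nat.dvd_of_mul_dvd_mul_left hs.pos hsq_dvd)

end

theorem centralizer_eq_zpowers_of_order_pqr {G : Type*} [Group G] [Finite G]
    (h : pgC4Free G) (p q r : ℕ) (hp : p.Prime) (hq : q.Prime) (hr : r.Prime)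
    (hpq : p ≠ q) (hpr : p ≠ r) (hqr : q ≠ r)
    (x : G) (hx : orderOf x = p * q * r) :
    Subgroup.centralizer ({x} : Set G) = Subgroup.zpowers x := by
  refine le_antisymm (fun y hy => ?_) (zpowers_le.mpr (mem_centralizer_singleton_iff.mpr rfl))
  by_contra hyx
  obtain ⟨z, hz, hzx, s, k, hs, hzo, hzs⟩ :=
    (zpowers x).exists_mem_zpowers_notMem_orderOf_eq_prime_pow (isOfFinOrder_of_finite y) hyx
  have hxz : Commute x z := by
    obtain ⟨n, rfl⟩ := mem_zpowers_iff.mp hz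
    exact Commute.zpow_right (mem_centralizer_singleton_iff.mp hy).symm n
  -- Relabel `p, q, r` so that `s` is distinct from the last two of them.
  by_cases hsq : s = q
  · subst hsq
    exact h.false_of_commute_of_orderOf_prime_pow hs hp hr hs hpq.symm hqr hpr hpq.symm hqr
      (by rw [hx]; ring) hxz hzo hzs hzx
  by_cases hsr : s = r
  · subst hsr
    exact h.false_of_commute_of_orderOf_prime_pow hs hp hq hs hpr.symm hqr.symm hpq hpr.symm
      hqr.symm (by rw [hx]; ring) hxz hzo hzs hzx
  exact h.false_of_commute_of_orderOf_prime_pow hp hq hr hs hpq hpr hqr hsq hsr hx hxz hzo hzs hzx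
end

section
/- Let G be a finite group whose power graph P(G) is C_4-free, let x ∈ G have order pq for distinct primes p, q, and suppose |C_G(x)| = p^u q^v. Then there is an ordering (r, s) of the pair (p, q) such that every Sylow r-subgroup of C_G(x) has exponent r, and for any Sylow s-subgroup S of C_G(x) the Hughes subgroup H_s(S) is a cyclic subgroup that is normal in C_G(x). -/
/-- The Hughes subgroup of `H` with respect to the prime `p`: the subgroup
generated by all elements whose order is different from `p`. -/
def hughesSubgroup (p : ℕ) (H : Type*) [Group H] : Subgroup H :=
  Subgroup.closure {h : H | orderOf h ≠ p}

open Subgroup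

section PowerGraph

variable {G : Type*} [Group G]

theorem pgAdj_of_mem_zpowers {x y : G} (h : x ∈ zpowers y) (hne : x ≠ y) : pgAdj x y :=
  ⟨hne, .inl h⟩

theorem pgC4Free.mem_zpowers_or_mem_zpowers (hG : pgC4Free G) {x u y v : G}
    (hxu : pgAdj x u) (huy : pgAdj u y) (hyv : pgAdj y v) (hvx : pgAdj v x)
    (huv : u ∉ zpowers v) (hvu : v ∉ zpowers u) : x ∈ zpowers y ∨ y ∈ zpowers x := by
  by_contra hxy
  have hne : ∀ {a b : G}, a ∉ zpowers b → a ≠ b := fun h e => h (e ▸ mem_zpowers _)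
  exact hG ⟨x, u, y, v, hxu.1, hne (not_or.mp hxy).1, hvx.1.symm, huy.1, hne huv, hyv.1,
    hxu, huy, hyv, hvx, fun h => hxy h.2, fun h => h.2.elim huv hvu⟩

theorem pgC4Free.of_injective {H : Type*} [Group H] (hG : pgC4Free G) (f : H →* G)
    (hf : Function.Injective f) : pgC4Free H := by
  have hmem : ∀ a b : H, f a ∈ zpowers (f b) ↔ a ∈ zpowers b := fun a b => by
    rw [← MonoidHom.map_zpowers, mem_map_iff_mem hf]
  have hadj : ∀ a b : H, pgAdj (f a) (f b) ↔ pgAdj a b := fun a b => by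
    simp only [pgAdj, hmem, hf.ne_iff]
  rintro ⟨x, u, y, v, h1, h2, h3, h4, h5, h6, a1, a2, a3, a4, n1, n2⟩
  exact hG ⟨f x, f u, f y, f v, hf.ne h1, hf.ne h2, hf.ne h3, hf.ne h4, hf.ne h5, hf.ne h6,
    (hadj _ _).2 a1, (hadj _ _).2 a2, (hadj _ _).2 a3, (hadj _ _).2 a4,
    (hadj _ _).not.2 n1, (hadj _ _).not.2 n2⟩

end PowerGraph

section CoprimeParts

variable {G : Type*} [Group G] {M N : ℕ}

theorem pow_eq_one_of_mem_zpowers {x y : G} (h : x ∈ zpowers y) (hy : y ^ N = 1) :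
    x ^ N = 1 := by
  obtain ⟨k, rfl⟩ := h
  rw [← zpow_natCast, ← zpow_mul, mul_comm, zpow_mul, zpow_natCast, hy, one_zpow]

theorem ne_one_of_mem_zpowers {x y : G} (h : x ∈ zpowers y) (hx : x ≠ 1) : y ≠ 1 := by
  rintro rfl
  simp_all

theorem notMem_zpowers_of_coprime (hMN : M.Coprime N) {x y : G} (hx : x ^ M = 1)
    (hy : y ^ N = 1) (hx1 : x ≠ 1) : x ∉ zpowers y := fun h => by
  have := pow_gcd_eq_one.mpr ⟨hx, pow_eq_one_of_mem_zpowers h hy⟩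
  rw [hMN, pow_one] at this
  exact hx1 this

theorem exists_pow_mul_eq_left (hMN : M.Coprime N) :
    ∃ e : ℕ, ∀ a z : G, Commute a z → a ^ M = 1 → z ^ N = 1 → (a * z) ^ e = a := by
  obtain ⟨e, he1, he0⟩ := Nat.chineseRemainder hMN 1 0
  refine ⟨e, fun a z haz ha hz => ?_⟩
  have hae : a ^ e = a ^ 1 := pow_eq_pow_iff_modEq.mpr (he1.of_dvd (orderOf_dvd_of_pow_eq_one ha))
  have hze : z ^ e = 1 := by
    obtain ⟨k, hk⟩ := (Nat.modEq_zero_iff_dvd.mp he0)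
    rw [hk, pow_mul, hz, one_pow]
  rw [haz.mul_pow, hae, hze, pow_one, mul_one]

theorem Commute.mem_zpowers_mul_left_s11 (hMN : M.Coprime N) {a z : G} (haz : Commute a z)
    (ha : a ^ M = 1) (hz : z ^ N = 1) : a ∈ zpowers (a * z) := by
  obtain ⟨e, he⟩ := exists_pow_mul_eq_left (G := G) hMN
  exact ⟨e, by simp [he a z haz ha hz]⟩

theorem Commute.mem_zpowers_mul_right_s11 (hMN : M.Coprime N) {a z : G} (haz : Commute a z)
    (ha : a ^ M = 1) (hz : z ^ N = 1) : z ∈ zpowers (a * z) :=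
  haz.eq ▸ haz.symm.mem_zpowers_mul_left_s11 hMN.symm hz ha

theorem mem_zpowers_of_mul_mem_zpowers_mul (hMN : M.Coprime N) {a z b w : G}
    (haz : Commute a z) (hbw : Commute b w) (ha : a ^ M = 1) (hz : z ^ N = 1)
    (hb : b ^ M = 1) (hw : w ^ N = 1) (h : a * z ∈ zpowers (b * w)) : a ∈ zpowers b := by
  obtain ⟨e, he⟩ := exists_pow_mul_eq_left (G := G) hMN
  obtain ⟨k, hk⟩ := h
  refine ⟨k, ?_⟩
  simp only at hk ⊢
  rw [← he a z haz ha hz, ← he b w hbw hb hw, ← hk, ← zpow_natCast, ← zpow_natCast, ← zpow_mul,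
    ← zpow_mul, mul_comm]

end CoprimeParts

section Cycles

variable {G : Type*} [Group G] {M N : ℕ}

/-- The cycle `a z — z — b z — w`, whose diagonal `z, w` is incomparable. -/
theorem pgC4Free.mem_zpowers_or_mem_zpowers_of_common_mem (hG : pgC4Free G)
    (hMN : M.Coprime N) {a b z w : G} (ha : a ^ M = 1) (hb : b ^ M = 1) (hz : z ^ N = 1)
    (hz1 : z ≠ 1) (haz : Commute a z) (hbz : Commute b z) (hwa : w ∈ zpowers a)
    (hwb : w ∈ zpowers b) (hw1 : w ≠ 1) : a ∈ zpowers b ∨ b ∈ zpowers a := by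
  have hw : w ^ M = 1 := pow_eq_one_of_mem_zpowers hwa ha
  have hzw : z ∉ zpowers w := notMem_zpowers_of_coprime hMN.symm hz hw hz1
  have hwz : w ∉ zpowers z := notMem_zpowers_of_coprime hMN hw hz hw1
  have hz_az : z ∈ zpowers (a * z) := haz.mem_zpowers_mul_right_s11 hMN ha hz
  have hz_bz : z ∈ zpowers (b * z) := hbz.mem_zpowers_mul_right_s11 hMN hb hz
  have hw_az : w ∈ zpowers (a * z) := zpowers_le.mpr (haz.mem_zpowers_mul_left_s11 hMN ha hz) hwa
  have hw_bz : w ∈ zpowers (b * z) := zpowers_le.mpr (hbz.mem_zpowers_mul_left_s11 hMN hb hz) hwb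
  have hcycle := hG.mem_zpowers_or_mem_zpowers
    (pgAdj_of_mem_zpowers hz_az (mul_ne_right.mpr (ne_one_of_mem_zpowers hwa hw1)).symm).symm
    (pgAdj_of_mem_zpowers hz_bz (mul_ne_right.mpr (ne_one_of_mem_zpowers hwb hw1)).symm)
    (pgAdj_of_mem_zpowers hw_bz (fun e => hzw (e ▸ hz_bz))).symm
    (pgAdj_of_mem_zpowers hw_az (fun e => hzw (e ▸ hz_az))) hzw hwz
  exact hcycle.imp (mem_zpowers_of_mul_mem_zpowers_mul hMN haz hbz ha hz hb hz)
    (mem_zpowers_of_mul_mem_zpowers_mul hMN hbz haz hb hz ha hz)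

/-- The cycle `a y — x — b x — y`, whose diagonal `x, y` is incomparable. -/
theorem pgC4Free.mem_zpowers_or_mem_zpowers_of_cross (hG : pgC4Free G) (hMN : M.Coprime N)
    {a b x y : G} (ha : a ^ M = 1) (hb : b ^ N = 1) (hxa : x ∈ zpowers a) (hyb : y ∈ zpowers b)
    (hx1 : x ≠ 1) (hy1 : y ≠ 1) (hay : Commute a y) (hbx : Commute b x) :
    a ∈ zpowers x ∨ b ∈ zpowers y := by
  have hx : x ^ M = 1 := pow_eq_one_of_mem_zpowers hxa ha
  have hy : y ^ N = 1 := pow_eq_one_of_mem_zpowers hyb hb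
  have hxy : x ∉ zpowers y := notMem_zpowers_of_coprime hMN hx hy hx1
  have hyx : y ∉ zpowers x := notMem_zpowers_of_coprime hMN.symm hy hx hy1
  have hy_ay : y ∈ zpowers (a * y) := hay.mem_zpowers_mul_right_s11 hMN ha hy
  have hx_bx : x ∈ zpowers (b * x) := hbx.mem_zpowers_mul_right_s11 hMN.symm hb hx
  have hx_ay : x ∈ zpowers (a * y) := zpowers_le.mpr (hay.mem_zpowers_mul_left_s11 hMN ha hy) hxa
  have hy_bx : y ∈ zpowers (b * x) :=
    zpowers_le.mpr (hbx.mem_zpowers_mul_left_s11 hMN.symm hb hx) hyb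
  have hcycle := hG.mem_zpowers_or_mem_zpowers
    (pgAdj_of_mem_zpowers hx_ay (fun e => hyx (e ▸ hy_ay))).symm
    (pgAdj_of_mem_zpowers hx_bx (mul_ne_right.mpr (ne_one_of_mem_zpowers hyb hy1)).symm)
    (pgAdj_of_mem_zpowers hy_bx (fun e => hxy (e ▸ hx_bx))).symm
    (pgAdj_of_mem_zpowers hy_ay (mul_ne_right.mpr (ne_one_of_mem_zpowers hxa hx1)).symm)
    hxy hyx
  exact hcycle.imp
    (fun h => mem_zpowers_of_mul_mem_zpowers_mul hMN hay hbx.symm ha hy hx hb (hbx.eq ▸ h))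
    (fun h => mem_zpowers_of_mul_mem_zpowers_mul hMN.symm hbx hay.symm hb hx hy ha (hay.eq ▸ h))

end Cycles

theorem pgC4Free.mem_zpowers_of_orderOf_eq_pow {G : Type*} [Group G] [Finite G]
    (hG : pgC4Free G) {p N n : ℕ} (hp : 1 < p) (hpN : p.Coprime N) {a c z : G}
    (ha : orderOf a = p ^ (n + 2)) (hc : c ^ p = 1) (hz : z ^ N = 1) (hz1 : z ≠ 1)
    (hac : Commute a c) (haz : Commute a z) (hcz : Commute c z) : c ∈ zpowers a := by
  have hpow : ∀ m, p ∣ m → (a * c) ^ m = a ^ m := by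
    rintro m ⟨k, rfl⟩
    rw [hac.mul_pow, pow_mul c, hc, one_pow, mul_one]
  have ha' : a ^ p ^ (n + 2) = 1 := ha ▸ pow_orderOf_eq_one a
  have hac' : (a * c) ^ p ^ (n + 2) = 1 := by
    rw [hpow _ (dvd_pow_self p (n + 1).succ_ne_zero), ha']
  have hw1 : a ^ p ^ (n + 1) ≠ 1 := fun h => by
    have := orderOf_dvd_of_pow_eq_one h
    rw [ha, Nat.pow_dvd_pow_iff_le_right hp] at this
    omega
  have hw : a ^ p ^ (n + 1) ∈ zpowers (a * c) :=
    hpow _ (dvd_pow_self p n.succ_ne_zero) ▸ npow_mem_zpowers _ _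
  suffices a * c ∈ zpowers a by simpa using mul_mem (inv_mem (mem_zpowers a)) this
  rcases hG.mem_zpowers_or_mem_zpowers_of_common_mem (hpN.pow_left _) ha' hac' hz hz1 haz
    (haz.mul_left hcz) (npow_mem_zpowers a _) hw hw1 with h | h
  · have hord : orderOf (a * c) = orderOf a :=
      Nat.dvd_antisymm (ha ▸ orderOf_dvd_of_pow_eq_one hac') (orderOf_dvd_of_mem_zpowers h)
    have heq : zpowers a = zpowers (a * c) := eq_of_le_of_card_ge (zpowers_le.mpr h)
      (by rw [Nat.card_zpowers, Nat.card_zpowers, hord])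
    exact heq ▸ mem_zpowers _
  · exact h

section SylowStructure

variable {G : Type*} [Group G]

theorem Set.Finite.exists_forall_mem_zpowers {T : Set G} (hT : T.Finite) (hne : T.Nonempty)
    (hchain : ∀ y ∈ T, ∀ b ∈ T, y ∈ zpowers b ∨ b ∈ zpowers y) :
    ∃ b ∈ T, ∀ y ∈ T, y ∈ zpowers b := by
  obtain ⟨b, hbT, hbmax⟩ := hT.exists_maximalFor zpowers T hne
  refine ⟨b, hbT, fun y hy => (hchain y hy b hbT).elim id fun hb => ?_⟩
  exact hbmax hy (zpowers_le.mpr hb) (mem_zpowers y)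

theorem Sylow.exponent_eq_prime [Finite G] {r : ℕ} (hr : r.Prime) (hdvd : r ∣ Nat.card G)
    (hsq : ∀ g : G, orderOf g ≠ r ^ 2) (R : Sylow r G) : Monoid.exponent R = r := by
  have : Fact r.Prime := ⟨hr⟩
  have : Nontrivial R := (nontrivial_iff_ne_bot _).mpr (R.ne_bot_of_dvd_card hdvd)
  refine (Monoid.exponent_eq_prime_iff hr).mpr fun g hg => ?_
  obtain ⟨k, hk⟩ := IsPGroup.iff_orderOf.mp R.isPGroup' g
  have hk0 : k ≠ 0 := fun h => hg (orderOf_eq_one_iff.mp (by rw [hk, h, pow_zero]))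
  have hk2 : k < 2 := by
    by_contra! h
    have hdvd2 : r ^ 2 ∣ orderOf g := hk ▸ pow_dvd_pow r h
    apply hsq ((g ^ (orderOf g / r ^ 2) : R) : G)
    rw [orderOf_coe, orderOf_pow_orderOf_div (hk ▸ pow_ne_zero k hr.ne_zero) hdvd2]
  rw [hk, show k = 1 by omega, pow_one]

theorem isCyclic_and_normal_map_hughesSubgroup {s : ℕ} (hs : s.Prime) {b : G}
    (hb : ∃ k, orderOf b = s ^ k) (hbs : orderOf b ≠ s)
    (hT : ∀ y : G, orderOf y ≠ s → (∃ k, orderOf y = s ^ k) → y ∈ zpowers b) (S : Sylow s G) :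
    IsCyclic ((hughesSubgroup s S).map (S : Subgroup G).subtype) ∧
      ((hughesSubgroup s S).map (S : Subgroup G).subtype).Normal := by
  have : Fact s.Prime := ⟨hs⟩
  have hconj : ∀ g : G, g * b * g⁻¹ ∈ zpowers b := fun g => by
    have hord := MulEquiv.orderOf_eq (MulAut.conj g) b
    rw [MulAut.conj_apply] at hord
    exact hT _ (hord ▸ hbs) (hord ▸ hb)
  have hnormal : (zpowers b).Normal := ⟨fun _ ⟨k, hk⟩ g => hk ▸ by simpa using zpow_mem (hconj g) k⟩
  obtain ⟨k, hk⟩ := hb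
  have hbS : b ∈ S :=
    (IsPGroup.of_card (by rw [Nat.card_zpowers, hk])).le_sylow_of_normal S (mem_zpowers b)
  suffices (hughesSubgroup s S).map (S : Subgroup G).subtype = zpowers b from
    this ▸ ⟨inferInstance, inferInstance⟩
  rw [hughesSubgroup, MonoidHom.map_closure]
  refine le_antisymm ((closure_le _).mpr ?_) (zpowers_le.mpr (subset_closure ⟨⟨b, hbS⟩, ?_, rfl⟩))
  · rintro _ ⟨g, hg, rfl⟩
    exact hT g (by rwa [orderOf_coe])
      (by simpa using IsPGroup.iff_orderOf.mp S.isPGroup' g)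
  · simpa [orderOf_mk] using hbs

end SylowStructure

section Central

variable {G : Type*} [Group G] [Finite G]

theorem pgC4Free.mem_zpowers_or_mem_zpowers_of_orderOf_eq_prime_pow (hG : pgC4Free G)
    {p s : ℕ} (hp : p.Prime) (hs : s.Prime) (hps : p ≠ s) {zp zs : G} (hzp : orderOf zp = p)
    (hzs : orderOf zs = s) (hzpc : zp ∈ center G) (hzsc : zs ∈ center G) {y b : G} {j k : ℕ}
    (hy : orderOf y = s ^ j) (hb : orderOf b = s ^ k) (hj : j ≠ 1) (hk : k ≠ 1) :
    y ∈ zpowers b ∨ b ∈ zpowers y := by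
  have hsp : s.Coprime p := (Nat.coprime_primes hs hp).mpr hps.symm
  have hzp1 : zp ≠ 1 := fun h => hp.ne_one (hzp ▸ orderOf_eq_one_iff.mpr h)
  have hzs_mem : ∀ {a : G} {n : ℕ}, orderOf a = s ^ (n + 2) → zs ∈ zpowers a := fun ha =>
    hG.mem_zpowers_of_orderOf_eq_pow hs.one_lt hsp ha (hzs ▸ pow_orderOf_eq_one zs)
      (hzp ▸ pow_orderOf_eq_one zp) hzp1 (mem_center_iff.mp hzsc _)
      (mem_center_iff.mp hzpc _) (mem_center_iff.mp hzpc _)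
  rcases j with _ | _ | j
  · simp [orderOf_eq_one_iff.mp (by rw [hy, pow_zero]), one_mem]
  · exact absurd rfl hj
  rcases k with _ | _ | k
  · simp [orderOf_eq_one_iff.mp (by rw [hb, pow_zero]), one_mem]
  · exact absurd rfl hk
  have hM : (orderOf y * orderOf b).Coprime p := by
    rw [hy, hb]
    exact (hsp.pow_left _).mul_left (hsp.pow_left _)
  exact hG.mem_zpowers_or_mem_zpowers_of_common_mem hM
    (orderOf_dvd_iff_pow_eq_one.mp (dvd_mul_right _ _))
    (orderOf_dvd_iff_pow_eq_one.mp (dvd_mul_left _ _)) (hzp ▸ pow_orderOf_eq_one zp) hzp1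
    (mem_center_iff.mp hzpc _) (mem_center_iff.mp hzpc _) (hzs_mem hy) (hzs_mem hb)
    (fun h => hs.ne_one (hzs ▸ orderOf_eq_one_iff.mpr h))

theorem pgC4Free.forall_orderOf_ne_sq_or (hG : pgC4Free G) {p q : ℕ} (hp : p.Prime) (hq : q.Prime)
    (hpq : p ≠ q) {zp zq : G} (hzp : orderOf zp = p) (hzq : orderOf zq = q)
    (hzpc : zp ∈ center G) (hzqc : zq ∈ center G) :
    (∀ a : G, orderOf a ≠ p ^ 2) ∨ ∀ b : G, orderOf b ≠ q ^ 2 := by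
  by_contra! ⟨⟨a, ha⟩, ⟨b, hb⟩⟩
  have hpq' : p.Coprime q := (Nat.coprime_primes hp hq).mpr hpq
  have hzp1 : zp ≠ 1 := fun h => hp.ne_one (hzp ▸ orderOf_eq_one_iff.mpr h)
  have hzq1 : zq ≠ 1 := fun h => hq.ne_one (hzq ▸ orderOf_eq_one_iff.mpr h)
  have hzpa : zp ∈ zpowers a := hG.mem_zpowers_of_orderOf_eq_pow (n := 0) hp.one_lt hpq' ha
    (hzp ▸ pow_orderOf_eq_one zp) (hzq ▸ pow_orderOf_eq_one zq) hzq1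
    (mem_center_iff.mp hzpc _) (mem_center_iff.mp hzqc _) (mem_center_iff.mp hzqc _)
  have hzqb : zq ∈ zpowers b := hG.mem_zpowers_of_orderOf_eq_pow (n := 0) hq.one_lt hpq'.symm hb
    (hzq ▸ pow_orderOf_eq_one zq) (hzp ▸ pow_orderOf_eq_one zp) hzp1
    (mem_center_iff.mp hzqc _) (mem_center_iff.mp hzpc _) (mem_center_iff.mp hzpc _)
  have hsq : ∀ {r : ℕ} {g z : G}, r.Prime → orderOf g = r ^ 2 → orderOf z = r →
      g ∉ zpowers z := by
    intro r g z hr hg hz h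
    have := orderOf_dvd_of_mem_zpowers h
    rw [hg, hz] at this
    have := (Nat.pow_dvd_pow_iff_le_right (k := 2) (l := 1) hr.one_lt).mp (by rwa [pow_one])
    omega
  rcases hG.mem_zpowers_or_mem_zpowers_of_cross (hpq'.pow 2 2) (ha ▸ pow_orderOf_eq_one a)
    (hb ▸ pow_orderOf_eq_one b) hzpa hzqb hzp1 hzq1 (mem_center_iff.mp hzqc _)
    (mem_center_iff.mp hzpc _) with h | h
  · exact hsq hp ha hzp h
  · exact hsq hq hb hzq h

theorem pgC4Free.sylow_structure_of_mem_center (hG : pgC4Free G) {r s : ℕ} (hr : r.Prime)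
    (hs : s.Prime) (hrs : r ≠ s) {zr zs : G} (hzr : orderOf zr = r) (hzs : orderOf zs = s)
    (hzrc : zr ∈ center G) (hzsc : zs ∈ center G) (hsq : ∀ g : G, orderOf g ≠ r ^ 2) :
    (∀ R : Sylow r G, Monoid.exponent R = r) ∧
      ∀ S : Sylow s G, IsCyclic ((hughesSubgroup s S).map (S : Subgroup G).subtype) ∧
        ((hughesSubgroup s S).map (S : Subgroup G).subtype).Normal := by
  refine ⟨Sylow.exponent_eq_prime hr (hzr ▸ orderOf_dvd_natCard zr) hsq, fun S => ?_⟩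
  obtain ⟨b, ⟨hbs, hb⟩, hbT⟩ :=
    (Set.toFinite {y : G | orderOf y ≠ s ∧ ∃ k, orderOf y = s ^ k}).exists_forall_mem_zpowers
      ⟨1, by simp [hs.ne_one.symm], 0, by simp⟩ fun y ⟨hys, j, hj⟩ b ⟨hbs, k, hk⟩ =>
      hG.mem_zpowers_or_mem_zpowers_of_orderOf_eq_prime_pow hr hs hrs hzr hzs hzrc hzsc hj hk
        (by rintro rfl; exact hys (hj.trans (pow_one s)))
        (by rintro rfl; exact hbs (hk.trans (pow_one s)))
  exact isCyclic_and_normal_map_hughesSubgroup hs hb hbs (fun y h1 h2 => hbT y ⟨h1, h2⟩) S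

end Central

theorem centralizer_structure_of_order_pq_two_primes_general {G : Type*} [Group G] [Finite G]
    (h : pgC4Free G) (p q : ℕ) (hp : p.Prime) (hq : q.Prime) (hpq : p ≠ q)
    (x : G) (hx : orderOf x = p * q) :
    ∃ r s : ℕ, ((r = p ∧ s = q) ∨ (r = q ∧ s = p)) ∧
      (∀ R : Sylow r (Subgroup.centralizer ({x} : Set G)),
          Monoid.exponent (R : Subgroup (Subgroup.centralizer ({x} : Set G))) = r) ∧
      (∀ S : Sylow s (Subgroup.centralizer ({x} : Set G)),
          IsCyclic ((hughesSubgroup s (S : Subgroup (Subgroup.centralizer ({x} : Set G)))).map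
              (S : Subgroup (Subgroup.centralizer ({x} : Set G))).subtype) ∧
          ((hughesSubgroup s (S : Subgroup (Subgroup.centralizer ({x} : Set G)))).map
              (S : Subgroup (Subgroup.centralizer ({x} : Set G))).subtype).Normal) := by
  set C := centralizer ({x} : Set G)
  have hC : pgC4Free C := h.of_injective C.subtype C.subtype_injective
  let X : C := ⟨x, mem_centralizer_singleton_iff.mpr rfl⟩
  have hXc : X ∈ center C :=
    mem_center_iff.mpr fun g => Subtype.ext (mem_centralizer_singleton_iff.mp g.2)
  have hX : orderOf X = p * q := (orderOf_mk _ _).trans hx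
  have hX0 : orderOf X ≠ 0 := hX ▸ (mul_pos hp.pos hq.pos).ne'
  have hzp := orderOf_pow_orderOf_div hX0 (hX ▸ dvd_mul_right p q)
  have hzq := orderOf_pow_orderOf_div hX0 (hX ▸ dvd_mul_left q p)
  rcases hC.forall_orderOf_ne_sq_or hp hq hpq hzp hzq (pow_mem hXc _) (pow_mem hXc _)
    with hsq | hsq
  · exact ⟨p, q, .inl ⟨rfl, rfl⟩, hC.sylow_structure_of_mem_center hp hq hpq hzp hzq
      (pow_mem hXc _) (pow_mem hXc _) hsq⟩
  · exact ⟨q, p, .inr ⟨rfl, rfl⟩, hC.sylow_structure_of_mem_center hq hp hpq.symm hzq hzp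
      (pow_mem hXc _) (pow_mem hXc _) hsq⟩

theorem centralizer_structure_of_order_pq_two_primes {G : Type*} [Group G] [Finite G]
    (h : pgC4Free G) (p q : ℕ) (hp : p.Prime) (hq : q.Prime) (hpq : p ≠ q)
    (x : G) (hx : orderOf x = p * q)
    (u v : ℕ) (hcard : Nat.card (Subgroup.centralizer ({x} : Set G)) = p ^ u * q ^ v) :
    ∃ r s : ℕ, ((r = p ∧ s = q) ∨ (r = q ∧ s = p)) ∧
      (∀ R : Sylow r (Subgroup.centralizer ({x} : Set G)),
          Monoid.exponent (R : Subgroup (Subgroup.centralizer ({x} : Set G))) = r) ∧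
      (∀ S : Sylow s (Subgroup.centralizer ({x} : Set G)),
          IsCyclic ((hughesSubgroup s (S : Subgroup (Subgroup.centralizer ({x} : Set G)))).map
              (S : Subgroup (Subgroup.centralizer ({x} : Set G))).subtype) ∧
          ((hughesSubgroup s (S : Subgroup (Subgroup.centralizer ({x} : Set G)))).map
              (S : Subgroup (Subgroup.centralizer ({x} : Set G))).subtype).Normal) :=
  centralizer_structure_of_order_pq_two_primes_general h p q hp hq hpq x hx
end
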